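/- arXiv:1305.4700 — 5 statements merged into one kernel-verified Lean document; each statement's English description precedes it below -/
import Mathlib

section
/- (Right Pieri rule for immaculate functions.) For every composition α and every positive integer s, 𝔖_α · H_s = Σ_β 𝔖_β, where the sum is over all compositions β with α ⊂_s β, i.e. satisfying (i) |β| = |α| + s, (ii) α_j ≤ β_j for all 1 ≤ j ≤ ℓ(α), and (iii) ℓ(β) ≤ ℓ(α) + 1. -/
open scoped BigOperators

noncomputable section

/-- `NSym`: the free associative `ℚ`-algebra on noncommuting generators `H_1, H_2, …`. -/
abbrev NSym : Type := FreeAlgebra ℚ ℕ+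

/-- `H n` for an integer `n`: the generator `H_n` for `n > 0`, with `H_0 = 1` and `H_n = 0`
for `n < 0`. -/
noncomputable def H (n : ℤ) : NSym :=
  if h : 0 < n then FreeAlgebra.ι ℚ (⟨n.toNat, by omega⟩ : ℕ+)
  else if n = 0 then 1 else 0

/-- A composition: a list of positive integers. -/
def IsComp (α : List ℕ) : Prop := ∀ x ∈ α, 0 < x

/-- The immaculate function of an integer sequence `α`. -/
noncomputable def Imm (α : List ℤ) : NSym :=
  ∑ σ : Equiv.Perm (Fin α.length),
    (Equiv.Perm.sign σ : ℤ) •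
      (List.ofFn fun i : Fin α.length =>
        H (α.get i + ((σ i : ℕ) : ℤ) - ((i : ℕ) : ℤ))).prod

/-- The set `D(α)` of proper partial sums of a composition. -/
def Dset (α : List ℕ) : Set ℕ := {n | ∃ i, 0 < i ∧ i < α.length ∧ (α.take i).sum = n}

/-- The ribbon function `R_α`. -/
noncomputable def Ribbon (α : List ℕ) : NSym :=
  ∑ᶠ (β : List ℕ) (_ : IsComp β ∧ β.sum = α.sum ∧ Dset β ⊆ Dset α),
    (-1 : ℤ) ^ (α.length - β.length) • (β.map fun n => H (n : ℤ)).prod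

/-- The noncommutative power sum `Ψ_k`. -/
noncomputable def Psi (k : ℕ) : NSym :=
  ∑ i ∈ Finset.range k, (-1 : ℤ) ^ i • Ribbon (List.replicate i 1 ++ [k - i])

/-- `(i,j)` (0-indexed) is a cell of the skew diagram `γ/α`. -/
def Cell (α γ : List ℕ) (i j : ℕ) : Prop :=
  i < γ.length ∧ α.getD i 0 ≤ j ∧ j < γ.getD i 0

/-- An immaculate tableau of shape `γ/α`, encoded as a function which is zero off the
cells of `γ/α`, positive on the cells, weakly increasing along rows and strictly
increasing down the first column. -/
def IsImmTab (α γ : List ℕ) (f : ℕ → ℕ → ℕ) : Prop :=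
  (∀ i j, Cell α γ i j → 0 < f i j) ∧
  (∀ i j, ¬ Cell α γ i j → f i j = 0) ∧
  (∀ i j j', Cell α γ i j → Cell α γ i j' → j ≤ j' → f i j ≤ f i j') ∧
  (∀ i i', i < i' → Cell α γ i 0 → Cell α γ i' 0 → f i 0 < f i' 0)

/-- The number of cells of the filling `f` (of outer shape `γ`) containing the letter `k ≥ 1`. -/
def content (γ : List ℕ) (f : ℕ → ℕ → ℕ) (k : ℕ) : ℕ :=
  ((Finset.range γ.length ×ˢ Finset.range γ.sum).filter fun p => f p.1 p.2 = k).card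

/-- The reading word of a filling of shape `γ/α`: each row right to left, top to bottom. -/
def readWord (α γ : List ℕ) (f : ℕ → ℕ → ℕ) : List ℕ :=
  (List.range γ.length).flatMap fun i =>
    ((List.range' (α.getD i 0) (γ.getD i 0 - α.getD i 0)).reverse).map (f i)

/-- A word is Yamanouchi if every prefix has at least as many `j`'s as `j+1`'s, for all `j ≥ 1`. -/
def Yamanouchi (w : List ℕ) : Prop :=
  ∀ j k : ℕ, 0 < j → (w.take k).count (j + 1) ≤ (w.take k).count j

/-- `α ⊆ γ` componentwise. -/
def Contains (α γ : List ℕ) : Prop :=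
  α.length ≤ γ.length ∧ ∀ i < α.length, α.getD i 0 ≤ γ.getD i 0

/-- The immaculate Littlewood–Richardson coefficient `C_{α,λ}^β`: the number of Yamanouchi
immaculate tableaux of shape `β/α` and content `λ`. -/
noncomputable def Ccoef (α lam β : List ℕ) : ℕ :=
  Nat.card {f : ℕ → ℕ → ℕ //
    IsImmTab α β f ∧ (∀ k : ℕ, content β f (k + 1) = lam.getD k 0) ∧
    Yamanouchi (readWord α β f)}

/-- The axioms determining the operators `M_β^⊥` on `NSym`. -/
def MperpAxioms (Mp : List ℕ → NSym →ₗ[ℚ] NSym) : Prop :=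
  Mp [] = LinearMap.id ∧
  (∀ β : List ℕ, IsComp β → β ≠ [] → Mp β 1 = 0) ∧
  (∀ b : ℕ, ∀ rest : List ℕ, 0 < b → IsComp rest → ∀ n : ℕ, 1 ≤ n → ∀ x : NSym,
    Mp (b :: rest) (H (n : ℤ) * x)
      = H ((n : ℤ) - (b : ℤ)) * Mp rest x + H (n : ℤ) * Mp (b :: rest) x)

/-- The creation operator `𝔹_m`. -/
noncomputable def Bop (Mp : List ℕ → NSym →ₗ[ℚ] NSym) (m : ℤ) (x : NSym) : NSym :=
  ∑ᶠ i : ℕ, (-1 : ℤ) ^ i • (H (m + (i : ℤ)) * Mp (List.replicate i 1) x)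


namespace PieriAux

lemma H_neg {n : ℤ} (h : n < 0) : H n = 0 := by
  unfold H; rw [dif_neg (by omega), if_neg (by omega)]

lemma H_zero : H 0 = 1 := by unfold H; simp

noncomputable def ImmF (K : ℕ) (g : Fin K → ℤ) : NSym :=
  ∑ σ : Equiv.Perm (Fin K),
    (Equiv.Perm.sign σ : ℤ) •
      (List.ofFn fun i : Fin K =>
        H (g i + ((σ i : ℕ) : ℤ) - ((i : ℕ) : ℤ))).prod

lemma Imm_eq_ImmF (l : List ℤ) : Imm l = ImmF l.length l.get := rfl

lemma ImmF_congr {K K' : ℕ} (h : K = K') (g : Fin K → ℤ) (g' : Fin K' → ℤ)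
    (hg : ∀ i : Fin K, g' (Fin.cast h i) = g i) : ImmF K' g' = ImmF K g := by
  subst h
  have : g' = g := funext fun i => by simpa using hg i
  rw [this]

lemma Imm_ofFn {K : ℕ} (g : Fin K → ℤ) : Imm (List.ofFn g) = ImmF K g := by
  rw [Imm_eq_ImmF]
  exact ImmF_congr (List.length_ofFn (f := g)).symm g _ (fun i => by simp [List.get_ofFn])

def csEquiv (m : ℕ) : Fin m ≃ {i : Fin (m+1) // (i : ℕ) < m} where
  toFun i := ⟨i.castSucc, by simp⟩
  invFun j := ⟨(j : Fin (m+1)), j.2⟩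
  left_inv i := rfl
  right_inv j := by ext; rfl

def extPerm {m : ℕ} (τ : Equiv.Perm (Fin m)) : Equiv.Perm (Fin (m+1)) :=
  τ.extendDomain (csEquiv m)

lemma extPerm_castSucc {m : ℕ} (τ : Equiv.Perm (Fin m)) (i : Fin m) :
    extPerm τ i.castSucc = (τ i).castSucc :=
  Equiv.Perm.extendDomain_apply_image τ (csEquiv m) i

lemma extPerm_last {m : ℕ} (τ : Equiv.Perm (Fin m)) :
    extPerm τ (Fin.last m) = Fin.last m :=
  Equiv.Perm.extendDomain_apply_not_subtype τ (csEquiv m) (by simp)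

lemma sign_extPerm {m : ℕ} (τ : Equiv.Perm (Fin m)) :
    Equiv.Perm.sign (extPerm τ) = Equiv.Perm.sign τ :=
  Equiv.Perm.sign_extendDomain τ (csEquiv m)

end PieriAux
namespace PieriAux

lemma sum_fix_last {m : ℕ} (g : Fin (m+1) → ℤ) :
    ∑ σ ∈ Finset.univ.filter
        (fun σ : Equiv.Perm (Fin (m+1)) => σ (Fin.last m) = Fin.last m),
      (Equiv.Perm.sign σ : ℤ) •
        (List.ofFn fun i : Fin (m+1) =>
          H (g i + ((σ i : ℕ) : ℤ) - ((i : ℕ) : ℤ))).prod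
    = ImmF m (fun i => g i.castSucc) * H (g (Fin.last m)) := by
  rw [ImmF, Finset.sum_mul]
  symm
  refine Finset.sum_bij (fun τ _ => extPerm τ) ?_ ?_ ?_ ?_
  · intro τ _
    simp [extPerm_last]
  · intro τ _ τ' _ h
    ext i
    have := congrArg (fun σ : Equiv.Perm (Fin (m+1)) => σ i.castSucc) h
    simp only [extPerm_castSucc] at this
    exact congrArg Fin.val (Fin.castSucc_injective m this)
  · intro σ hσ
    rw [Finset.mem_filter] at hσ
    have hfix : σ (Fin.last m) = Fin.last m := hσ.2
    have hlast : ∀ x : Fin (m+1), σ x = Fin.last m ↔ x = Fin.last m := by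
      intro x
      constructor
      · intro hc; exact σ.injective (by rw [hc, hfix])
      · intro hc; rw [hc, hfix]
    have hne : ∀ x : Fin (m+1), ((x:ℕ) < m) ↔ x ≠ Fin.last m := by
      intro x
      have := x.isLt
      rw [Ne, Fin.ext_iff, Fin.val_last]
      omega
    have hp : ∀ x : Fin (m+1), ((x:ℕ) < m) ↔ ((σ x : ℕ) < m) := by
      intro x
      rw [hne x, hne (σ x)]
      exact not_congr (hlast x).symm
    refine ⟨(csEquiv m).symm.permCongr (σ.subtypePerm (fun x => (hp x).symm)), Finset.mem_univ _, ?_⟩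
    ext i
    refine Fin.lastCases ?_ (fun j => ?_) i
    · rw [extPerm_last, hfix]
    · rw [extPerm_castSucc]
      rfl
  · intro τ _
    rw [sign_extPerm, smul_mul_assoc]
    congr 1
    conv_rhs => rw [List.ofFn_succ', List.prod_concat]
    congr 1
    · refine congrArg List.prod (congrArg List.ofFn (funext fun i => ?_))
      rw [extPerm_castSucc]
      simp
    · rw [extPerm_last]
      simp

lemma ImmF_pad {m : ℕ} (g : Fin (m+1) → ℤ) (hg : g (Fin.last m) = 0) :
    ImmF (m+1) g = ImmF m (fun i => g i.castSucc) := by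
  rw [ImmF]
  rw [← Finset.sum_filter_add_sum_filter_not Finset.univ
    (fun σ : Equiv.Perm (Fin (m+1)) => σ (Fin.last m) = Fin.last m)]
  rw [sum_fix_last g, hg, H_zero, mul_one]
  rw [add_eq_left]
  refine Finset.sum_eq_zero ?_
  intro σ hσ
  rw [Finset.mem_filter] at hσ
  have h1 : ((σ (Fin.last m) : ℕ) : ℤ) - ((Fin.last m : ℕ) : ℤ) < 0 := by
    have h2 := (σ (Fin.last m)).isLt
    have h3 : (σ (Fin.last m) : ℕ) ≠ m := fun hc => hσ.2 (Fin.ext (by simp [hc]))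
    simp only [Fin.val_last]
    omega
  have : (0 : NSym) ∈ List.ofFn fun i : Fin (m+1) =>
      H (g i + ((σ i : ℕ) : ℤ) - ((i : ℕ) : ℤ)) := by
    rw [List.mem_ofFn]
    refine ⟨Fin.last m, ?_⟩
    show H (g (Fin.last m) + ((σ (Fin.last m) : ℕ) : ℤ) - ((Fin.last m : ℕ) : ℤ)) = 0
    rw [hg, zero_add]
    exact H_neg h1
  rw [List.prod_eq_zero this, smul_zero]

end PieriAux

namespace PieriAux

variable {m : ℕ}

abbrev PT (m : ℕ) := (Fin (m+1) → ℕ) × Equiv.Perm (Fin (m+1))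

def gpad (gα : Fin m → ℤ) : Fin (m+1) → ℤ := fun i => Fin.lastCases 0 gα i

@[simp] lemma gpad_last (gα : Fin m → ℤ) : gpad gα (Fin.last m) = 0 :=
  Fin.lastCases_last

@[simp] lemma gpad_castSucc (gα : Fin m → ℤ) (j : Fin m) :
    gpad gα j.castSucc = gα j := Fin.lastCases_castSucc j

def Mfun (p : PT m) : Fin (m+1) → ℕ := fun k => min (p.1 k + p.2 k) m

open Classical in
noncomputable def pick (M : Fin (m+1) → ℕ) : Fin (m+1) × Fin (m+1) :=
  if h : ∃ q : Fin (m+1) × Fin (m+1), q.1 ≠ q.2 ∧ M q.1 = M q.2 then h.choose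
  else (0, 0)

lemma pick_spec {M : Fin (m+1) → ℕ} (h : ¬ Function.Injective M) :
    (pick M).1 ≠ (pick M).2 ∧ M (pick M).1 = M (pick M).2 := by
  have h' : ∃ q : Fin (m+1) × Fin (m+1), q.1 ≠ q.2 ∧ M q.1 = M q.2 := by
    rw [Function.not_injective_iff] at h
    obtain ⟨a, b, hab, hne⟩ := h
    exact ⟨(a, b), hne, hab⟩
  rw [pick, dif_pos h']
  exact h'.choose_spec

open Classical in
noncomputable def invo (p : PT m) : PT m :=
  if Function.Injective (Mfun p) then p
  else
    (fun k =>
        if k = (pick (Mfun p)).1 then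
          p.1 (pick (Mfun p)).1 + (p.2 (pick (Mfun p)).1 : ℕ) - (p.2 (pick (Mfun p)).2 : ℕ)
        else if k = (pick (Mfun p)).2 then
          p.1 (pick (Mfun p)).2 + (p.2 (pick (Mfun p)).2 : ℕ) - (p.2 (pick (Mfun p)).1 : ℕ)
        else p.1 k,
      p.2 * Equiv.swap (pick (Mfun p)).1 (pick (Mfun p)).2)

lemma swap_bound {p : PT m} {i j : Fin (m+1)} (h : Mfun p i = Mfun p j) :
    (p.2 j : ℕ) ≤ p.1 i + (p.2 i : ℕ) := by
  calc (p.2 j : ℕ) ≤ min (p.1 j + (p.2 j : ℕ)) m :=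
        le_min (Nat.le_add_left _ _) (by have := (p.2 j).isLt; omega)
    _ = min (p.1 i + (p.2 i : ℕ)) m := h.symm
    _ ≤ p.1 i + (p.2 i : ℕ) := min_le_left _ _

lemma invo_of_inj {p : PT m} (h : Function.Injective (Mfun p)) : invo p = p := by
  rw [invo, if_pos h]

lemma invo_sum_pt {p : PT m} (h : ¬ Function.Injective (Mfun p)) (k : Fin (m+1)) :
    (invo p).1 k + ((invo p).2 k : ℕ) = p.1 k + (p.2 k : ℕ) := by
  obtain ⟨hne, hM⟩ := pick_spec h
  rw [invo, if_neg h]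
  set q1 := (pick (Mfun p)).1 with hq1
  set q2 := (pick (Mfun p)).2 with hq2
  have b1 : (p.2 q2 : ℕ) ≤ p.1 q1 + (p.2 q1 : ℕ) := swap_bound hM
  have b2 : (p.2 q1 : ℕ) ≤ p.1 q2 + (p.2 q2 : ℕ) := swap_bound hM.symm
  show (if k = q1 then _ else if k = q2 then _ else p.1 k) +
      ((p.2 (Equiv.swap q1 q2 k) : ℕ)) = _
  by_cases h1 : k = q1
  · subst h1
    rw [if_pos rfl, Equiv.swap_apply_left]
    omega
  · by_cases h2 : k = q2
    · subst h2
      rw [if_neg h1, if_pos rfl, Equiv.swap_apply_right]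
      omega
    · rw [if_neg h1, if_neg h2, Equiv.swap_apply_of_ne_of_ne h1 h2]

lemma Mfun_invo {p : PT m} (h : ¬ Function.Injective (Mfun p)) :
    Mfun (invo p) = Mfun p := by
  funext k
  rw [Mfun, Mfun]
  rw [invo_sum_pt h k]

end PieriAux

namespace PieriAux

variable {m : ℕ}

lemma invo_snd {p : PT m} (h : ¬ Function.Injective (Mfun p)) :
    (invo p).2 = p.2 * Equiv.swap (pick (Mfun p)).1 (pick (Mfun p)).2 := by
  rw [invo, if_neg h]

lemma invo_fst_apply {p : PT m} (h : ¬ Function.Injective (Mfun p)) (k : Fin (m+1)) :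
    (invo p).1 k =
      if k = (pick (Mfun p)).1 then
        p.1 (pick (Mfun p)).1 + (p.2 (pick (Mfun p)).1 : ℕ) - (p.2 (pick (Mfun p)).2 : ℕ)
      else if k = (pick (Mfun p)).2 then
        p.1 (pick (Mfun p)).2 + (p.2 (pick (Mfun p)).2 : ℕ) - (p.2 (pick (Mfun p)).1 : ℕ)
      else p.1 k := by
  rw [invo, if_neg h]

lemma invo_invo (p : PT m) : invo (invo p) = p := by
  by_cases h : Function.Injective (Mfun p)
  · rw [invo_of_inj h, invo_of_inj h]
  · have hM := Mfun_invo h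
    have h2 : ¬ Function.Injective (Mfun (invo p)) := by rw [hM]; exact h
    obtain ⟨hne, hMeq⟩ := pick_spec h
    have b1 := swap_bound hMeq
    have b2 := swap_bound hMeq.symm
    have hpick : pick (Mfun (invo p)) = pick (Mfun p) := by rw [hM]
    set q1 := (pick (Mfun p)).1 with hq1
    set q2 := (pick (Mfun p)).2 with hq2
    have e1 : ((invo p).2 q1 : ℕ) = (p.2 q2 : ℕ) := by
      rw [invo_snd h, Equiv.Perm.mul_apply, Equiv.swap_apply_left]
    have e2 : ((invo p).2 q2 : ℕ) = (p.2 q1 : ℕ) := by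
      rw [invo_snd h, Equiv.Perm.mul_apply, Equiv.swap_apply_right]
    have f1 : (invo p).1 q1 = p.1 q1 + (p.2 q1 : ℕ) - (p.2 q2 : ℕ) := by
      rw [invo_fst_apply h, if_pos rfl]
    have f2 : (invo p).1 q2 = p.1 q2 + (p.2 q2 : ℕ) - (p.2 q1 : ℕ) := by
      rw [invo_fst_apply h, if_neg (Ne.symm hne), if_pos rfl]
    refine Prod.ext ?_ ?_
    · funext k
      rw [invo_fst_apply h2, hpick]
      by_cases hk1 : k = q1
      · subst hk1
        rw [if_pos rfl, f1, e1, e2]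
        omega
      · by_cases hk2 : k = q2
        · subst hk2
          rw [if_neg hk1, if_pos rfl, f2, e1, e2]
          omega
        · rw [if_neg hk1, if_neg hk2, invo_fst_apply h, if_neg hk1, if_neg hk2]
    · rw [invo_snd h2, hpick, invo_snd h, mul_assoc, Equiv.swap_mul_self, mul_one]

lemma invo_sum_fst {p : PT m} (h : ¬ Function.Injective (Mfun p)) :
    ∑ k, (invo p).1 k = ∑ k, p.1 k := by
  have hsum : ∑ k, ((invo p).1 k + ((invo p).2 k : ℕ))
      = ∑ k, (p.1 k + (p.2 k : ℕ)) :=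
    Finset.sum_congr rfl fun k _ => invo_sum_pt h k
  rw [Finset.sum_add_distrib, Finset.sum_add_distrib] at hsum
  have e1 : ∑ k, ((invo p).2 k : ℕ) = ∑ k : Fin (m+1), (k : ℕ) :=
    Equiv.sum_comp (invo p).2 (fun x : Fin (m+1) => (x : ℕ))
  have e2 : ∑ k, (p.2 k : ℕ) = ∑ k : Fin (m+1), (k : ℕ) :=
    Equiv.sum_comp p.2 (fun x : Fin (m+1) => (x : ℕ))
  omega

end PieriAux

namespace PieriAux

variable {m : ℕ}

noncomputable def Fterm (gα : Fin m → ℤ) (p : PT m) : NSym :=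
  (Equiv.Perm.sign p.2 : ℤ) •
    (List.ofFn fun i : Fin (m+1) =>
      H (gpad gα i + (p.1 i : ℤ) + ((p.2 i : ℕ) : ℤ) - ((i : ℕ) : ℤ))).prod

lemma Fterm_invo (gα : Fin m → ℤ) {p : PT m} (h : ¬ Function.Injective (Mfun p)) :
    Fterm gα (invo p) = - Fterm gα p := by
  obtain ⟨hne, _⟩ := pick_spec h
  have hsgn : Equiv.Perm.sign ((invo p).2) = - Equiv.Perm.sign p.2 := by
    rw [invo_snd h, Equiv.Perm.sign_mul, Equiv.Perm.sign_swap hne, mul_neg_one]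
  have hlist : (List.ofFn fun i : Fin (m+1) =>
        H (gpad gα i + ((invo p).1 i : ℤ) + (((invo p).2 i : ℕ) : ℤ) - ((i : ℕ) : ℤ)))
      = (List.ofFn fun i : Fin (m+1) =>
        H (gpad gα i + (p.1 i : ℤ) + ((p.2 i : ℕ) : ℤ) - ((i : ℕ) : ℤ))) := by
    refine congrArg List.ofFn (funext fun i => ?_)
    have := invo_sum_pt h i
    have hz : ((invo p).1 i : ℤ) + (((invo p).2 i : ℕ) : ℤ)
        = (p.1 i : ℤ) + ((p.2 i : ℕ) : ℤ) := by exact_mod_cast this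
    congr 1
    omega
  rw [Fterm, Fterm, hsgn, hlist]
  rw [Units.val_neg]
  rw [neg_smul]

lemma inj_case {s : ℕ} (gα : Fin m → ℤ) {p : PT m} (hc : ∑ k, p.1 k = s)
    (hinj : Function.Injective (Mfun p))
    (hnq : ¬ (p.1 = Pi.single (Fin.last m) s ∧ p.2 (Fin.last m) = Fin.last m)) :
    (List.ofFn fun i : Fin (m+1) =>
      H (gpad gα i + (p.1 i : ℤ) + ((p.2 i : ℕ) : ℤ) - ((i : ℕ) : ℤ))).prod = 0 := by
  classical
  have hle : ∀ k, (p.2 k : ℕ) ≤ Mfun p k := fun k =>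
    le_min (Nat.le_add_left _ _) (by have := (p.2 k).isLt; omega)
  have hMlt : ∀ k, Mfun p k < m + 1 := fun k => by
    have : Mfun p k ≤ m := min_le_right _ _
    omega
  have hsum_inj : ∀ (f : Fin (m+1) → ℕ), Function.Injective f → (∀ k, f k < m + 1) →
      ∑ k, f k = ∑ i ∈ Finset.range (m+1), i := by
    intro f hf hb
    have hsub : Finset.image f Finset.univ ⊆ Finset.range (m+1) := by
      intro x hx
      rw [Finset.mem_image] at hx
      obtain ⟨k, _, rfl⟩ := hx
      exact Finset.mem_range.2 (hb k)
    have hcard : (Finset.image f Finset.univ).card = m + 1 := by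
      rw [Finset.card_image_of_injective _ hf, Finset.card_univ, Fintype.card_fin]
    have heq : Finset.image f Finset.univ = Finset.range (m+1) :=
      Finset.eq_of_subset_of_card_le hsub (by rw [hcard, Finset.card_range])
    calc ∑ k, f k = ∑ x ∈ Finset.image f Finset.univ, x :=
          (Finset.sum_image (f := fun x => x) (fun a _ b _ hab => hf hab)).symm
      _ = _ := by rw [heq]
  have hσinj : Function.Injective (fun k : Fin (m+1) => (p.2 k : ℕ)) := by
    intro a b hab
    exact p.2.injective (Fin.ext hab)
  have hsum_eq : ∑ k, (p.2 k : ℕ) = ∑ k, Mfun p k := by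
    rw [hsum_inj _ hσinj (fun k => (p.2 k).isLt), hsum_inj _ hinj hMlt]
  have hall : ∀ k, (p.2 k : ℕ) = Mfun p k := by
    have := (Finset.sum_eq_sum_iff_of_le (fun k _ => hle k)).1 hsum_eq
    exact fun k => this k (Finset.mem_univ k)
  -- key: if σ k < m then c k = 0
  have hc0 : ∀ k, (p.2 k : ℕ) < m → p.1 k = 0 := by
    intro k hk
    have := hall k
    rw [Mfun] at this
    omega
  by_cases hfix : p.2 (Fin.last m) = Fin.last m
  · -- then p.1 = Pi.single last s, contradiction
    exfalso
    apply hnq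
    refine ⟨?_, hfix⟩
    have hzero : ∀ k, k ≠ Fin.last m → p.1 k = 0 := by
      intro k hk
      apply hc0
      have h1 : p.2 k ≠ Fin.last m := fun hcon => hk (p.2.injective (by rw [hcon, hfix]))
      have h2 : (p.2 k : ℕ) ≠ m := fun hcon => h1 (Fin.ext (by simp [hcon]))
      have := (p.2 k).isLt
      omega
    have hlast : p.1 (Fin.last m) = s := by
      rw [← hc]
      rw [Finset.sum_eq_single_of_mem (Fin.last m) (Finset.mem_univ _)]
      intro b _ hb
      exact hzero b hb
    funext k
    by_cases hk : k = Fin.last m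
    · subst hk; rw [hlast, Pi.single_eq_same]
    · rw [hzero k hk, Pi.single_eq_of_ne hk]
  · -- factor at last position vanishes
    have h1 : (p.2 (Fin.last m) : ℕ) ≠ m := fun hcon => hfix (Fin.ext (by simp [hcon]))
    have h2 := (p.2 (Fin.last m)).isLt
    have hlt : (p.2 (Fin.last m) : ℕ) < m := by omega
    have hc0' : p.1 (Fin.last m) = 0 := hc0 _ hlt
    apply List.prod_eq_zero
    rw [List.mem_ofFn]
    refine ⟨Fin.last m, ?_⟩
    show H (gpad gα (Fin.last m) + (p.1 (Fin.last m) : ℤ) + ((p.2 (Fin.last m) : ℕ) : ℤ)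
      - ((Fin.last m : ℕ) : ℤ)) = 0
    rw [gpad_last, hc0']
    apply H_neg
    simp only [Fin.val_last]
    push_cast
    omega

end PieriAux

namespace PieriAux

variable {m : ℕ}

lemma Q_inj {s : ℕ} {p : PT m} (h1 : p.1 = Pi.single (Fin.last m) s)
    (h2 : p.2 (Fin.last m) = Fin.last m) : Function.Injective (Mfun p) := by
  have hval : ∀ k, k ≠ Fin.last m → Mfun p k = (p.2 k : ℕ) ∧ (p.2 k : ℕ) < m := by
    intro k hk
    have hc : p.1 k = 0 := by rw [h1, Pi.single_eq_of_ne hk]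
    have hne : p.2 k ≠ Fin.last m := fun hcon => hk (p.2.injective (by rw [hcon, h2]))
    have hlt : (p.2 k : ℕ) < m := by
      have := (p.2 k).isLt
      have : (p.2 k : ℕ) ≠ m := fun hcon => hne (Fin.ext (by simp [hcon]))
      omega
    constructor
    · rw [Mfun, hc, zero_add, min_eq_left (by omega)]
    · exact hlt
  have hlastM : Mfun p (Fin.last m) = m := by
    rw [Mfun, h2]
    simp [Fin.val_last]
  intro a b hab
  by_cases ha : a = Fin.last m
  · by_cases hb : b = Fin.last m
    · rw [ha, hb]
    · exfalso
      obtain ⟨e, lt⟩ := hval b hb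
      rw [ha, hlastM, e] at hab
      omega
  · by_cases hb : b = Fin.last m
    · exfalso
      obtain ⟨e, lt⟩ := hval a ha
      rw [hb, hlastM, e] at hab
      omega
    · obtain ⟨ea, _⟩ := hval a ha
      obtain ⟨eb, _⟩ := hval b hb
      rw [ea, eb] at hab
      exact p.2.injective (Fin.ext hab)

lemma core (gα : Fin m → ℤ) (s : ℕ) :
    ∑ c ∈ Finset.Nat.antidiagonalTuple (m+1) s,
      ImmF (m+1) (fun i => gpad gα i + (c i : ℤ))
    = ImmF m gα * H (s : ℤ) := by
  classical
  have step1 : ∑ c ∈ Finset.Nat.antidiagonalTuple (m+1) s,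
      ImmF (m+1) (fun i => gpad gα i + (c i : ℤ))
      = ∑ p ∈ Finset.Nat.antidiagonalTuple (m+1) s ×ˢ
          (Finset.univ : Finset (Equiv.Perm (Fin (m+1)))), Fterm gα p := by
    rw [Finset.sum_product]
    rfl
  rw [step1]
  rw [← Finset.sum_filter_add_sum_filter_not
    (Finset.Nat.antidiagonalTuple (m+1) s ×ˢ Finset.univ)
    (fun p : PT m => p.1 = Pi.single (Fin.last m) s ∧ p.2 (Fin.last m) = Fin.last m)]
  have hzero : ∑ p ∈ (Finset.Nat.antidiagonalTuple (m+1) s ×ˢ Finset.univ).filter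
      (fun p : PT m => ¬(p.1 = Pi.single (Fin.last m) s ∧ p.2 (Fin.last m) = Fin.last m)),
      Fterm gα p = 0 := by
    refine Finset.sum_involution (fun p _ => invo p) ?_ ?_ ?_ ?_
    · intro p hp
      beta_reduce
      rw [Finset.mem_filter, Finset.mem_product, Finset.Nat.mem_antidiagonalTuple] at hp
      by_cases h : Function.Injective (Mfun p)
      · have hz : Fterm gα p = 0 := by
          rw [Fterm, inj_case gα hp.1.1 h hp.2, smul_zero]
        rw [invo_of_inj h, hz, add_zero]
      · rw [Fterm_invo gα h, add_neg_cancel]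
    · intro p hp hf
      beta_reduce
      rw [Finset.mem_filter, Finset.mem_product, Finset.Nat.mem_antidiagonalTuple] at hp
      by_cases h : Function.Injective (Mfun p)
      · exact absurd (by rw [Fterm, inj_case gα hp.1.1 h hp.2, smul_zero]) hf
      · intro hcon
        obtain ⟨hne, hMeq⟩ := pick_spec h
        have h1 : (invo p).2 (pick (Mfun p)).1 = p.2 (pick (Mfun p)).2 := by
          rw [invo_snd h, Equiv.Perm.mul_apply, Equiv.swap_apply_left]
        have h2 : (invo p).2 (pick (Mfun p)).1 = p.2 (pick (Mfun p)).1 := by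
          rw [hcon]
        rw [h1] at h2
        exact hne (p.2.injective h2.symm)
    · intro p hp
      beta_reduce
      rw [Finset.mem_filter, Finset.mem_product, Finset.Nat.mem_antidiagonalTuple] at hp
      rw [Finset.mem_filter, Finset.mem_product, Finset.Nat.mem_antidiagonalTuple]
      by_cases h : Function.Injective (Mfun p)
      · rw [invo_of_inj h]
        exact hp
      · refine ⟨⟨?_, Finset.mem_univ _⟩, ?_⟩
        · rw [invo_sum_fst h]
          exact hp.1.1
        · intro hcon
          have hinj2 : Function.Injective (Mfun (invo p)) := Q_inj hcon.1 hcon.2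
          rw [Mfun_invo h] at hinj2
          exact h hinj2
    · intro p _
      exact invo_invo p
  rw [hzero, add_zero]
  have hset : (Finset.Nat.antidiagonalTuple (m+1) s ×ˢ Finset.univ).filter
      (fun p : PT m => p.1 = Pi.single (Fin.last m) s ∧ p.2 (Fin.last m) = Fin.last m)
      = {Pi.single (Fin.last m) s} ×ˢ
        (Finset.univ.filter fun σ : Equiv.Perm (Fin (m+1)) =>
          σ (Fin.last m) = Fin.last m) := by
    ext p
    rw [Finset.mem_filter, Finset.mem_product, Finset.mem_product,
      Finset.Nat.mem_antidiagonalTuple, Finset.mem_singleton, Finset.mem_filter]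
    constructor
    · rintro ⟨⟨_, _⟩, hq1, hq2⟩
      exact ⟨hq1, Finset.mem_univ _, hq2⟩
    · rintro ⟨hq1, _, hq2⟩
      refine ⟨⟨?_, Finset.mem_univ _⟩, hq1, hq2⟩
      rw [hq1]
      simp
  rw [hset, Finset.sum_product, Finset.sum_singleton]
  have hsummand : ∀ σ : Equiv.Perm (Fin (m+1)),
      Fterm gα (Pi.single (Fin.last m) s, σ)
      = (Equiv.Perm.sign σ : ℤ) • (List.ofFn fun i : Fin (m+1) =>
          H ((Fin.lastCases (s : ℤ) gα i) + ((σ i : ℕ) : ℤ) - ((i : ℕ) : ℤ))).prod := by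
    intro σ
    rw [Fterm]
    congr 1
    refine congrArg List.prod (congrArg List.ofFn (funext fun i => ?_))
    congr 1
    refine Fin.lastCases ?_ (fun j => ?_) i
    · dsimp only
      rw [gpad_last, Pi.single_eq_same, Fin.lastCases_last]
      push_cast
      ring
    · dsimp only
      rw [gpad_castSucc, Pi.single_eq_of_ne (Fin.castSucc_lt_last j).ne,
        Fin.lastCases_castSucc]
      push_cast
      ring
  rw [Finset.sum_congr rfl (fun σ _ => hsummand σ)]
  rw [sum_fix_last (fun i => Fin.lastCases (s : ℤ) gα i)]
  rw [Fin.lastCases_last]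
  congr 1
  refine ImmF_congr rfl _ _ (fun i => ?_)
  simp [Fin.lastCases_castSucc]

end PieriAux

namespace PieriAux

lemma eq_of_getD {l l' : List ℕ} (hl : l.length = l'.length)
    (h : ∀ j, l.getD j 0 = l'.getD j 0) : l = l' := by
  apply List.ext_getElem hl
  intro j h1 h2
  have := h j
  rwa [List.getD_eq_getElem _ _ h1, List.getD_eq_getElem _ _ h2] at this

lemma sum_getD_fin (l : List ℕ) (n : ℕ) (h : l.length ≤ n) :
    ∑ i : Fin n, l.getD i 0 = l.sum := by
  have h1 : ∑ i : Fin l.length, l.getD i 0 = l.sum := by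
    have : ∑ i : Fin l.length, l.getD i 0 = ∑ i : Fin l.length, l.get i := by
      refine Finset.sum_congr rfl fun i _ => ?_
      rw [List.getD_eq_getElem _ _ i.isLt]
      rfl
    rw [this]
    conv_rhs => rw [← List.ofFn_get l]
    rw [List.sum_ofFn]
  rw [Fin.sum_univ_eq_sum_range (fun i => l.getD i 0) n, ← h1,
    Fin.sum_univ_eq_sum_range (fun i => l.getD i 0) l.length]
  symm
  apply Finset.sum_subset (Finset.range_subset_range.2 h)
  intro x _ hx
  rw [Finset.mem_range, not_lt] at hx
  exact List.getD_eq_default _ _ hx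

variable (α : List ℕ)

def phi (c : Fin (α.length + 1) → ℕ) : List ℕ :=
  (List.ofFn fun i : Fin α.length => α.get i + c i.castSucc) ++
    (if c (Fin.last α.length) = 0 then [] else [c (Fin.last α.length)])

lemma phi_getD_lt (c : Fin (α.length + 1) → ℕ) (j : ℕ) (hj : j < α.length) :
    (phi α c).getD j 0 = α.get ⟨j, hj⟩ + c (Fin.castSucc ⟨j, hj⟩) := by
  rw [phi, List.getD_append _ _ _ _ (by simpa using hj),
    List.getD_eq_getElem _ _ (by simpa using hj), List.getElem_ofFn]

lemma phi_getD_last (c : Fin (α.length + 1) → ℕ) :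
    (phi α c).getD α.length 0 = c (Fin.last α.length) := by
  rw [phi]
  by_cases h : c (Fin.last α.length) = 0
  · rw [if_pos h, List.append_nil, List.getD_eq_default _ _ (by simp), h]
  · rw [if_neg h, List.getD_append_right _ _ _ _ (by simp), List.length_ofFn]
    simp

lemma phi_length (c : Fin (α.length + 1) → ℕ) :
    (phi α c).length
      = if c (Fin.last α.length) = 0 then α.length else α.length + 1 := by
  rw [phi]
  by_cases h : c (Fin.last α.length) = 0 <;> simp [h]

lemma phi_getD_gt (c : Fin (α.length + 1) → ℕ) (j : ℕ) (hj : α.length + 1 ≤ j) :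
    (phi α c).getD j 0 = 0 := by
  apply List.getD_eq_default
  rw [phi_length]
  split <;> omega

lemma phi_sum (s : ℕ) (c : Fin (α.length + 1) → ℕ) (hc : ∑ i, c i = s) :
    (phi α c).sum = α.sum + s := by
  rw [phi, List.sum_append, List.sum_ofFn]
  have h1 : ∑ i : Fin α.length, (α.get i + c i.castSucc)
      = α.sum + ∑ i : Fin α.length, c i.castSucc := by
    rw [Finset.sum_add_distrib]
    congr 1
    conv_rhs => rw [← List.ofFn_get α]
    rw [List.sum_ofFn]
  have h2 : ∑ i, c i = ∑ i : Fin α.length, c i.castSucc + c (Fin.last α.length) :=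
    Fin.sum_univ_castSucc c
  by_cases h : c (Fin.last α.length) = 0
  · rw [if_pos h, h1, List.sum_nil]
    omega
  · rw [if_neg h, h1, List.sum_cons, List.sum_nil]
    omega

lemma phi_isComp (hα : IsComp α) (c : Fin (α.length + 1) → ℕ) :
    IsComp (phi α c) := by
  intro x hx
  rw [phi, List.mem_append] at hx
  rcases hx with hx | hx
  · rw [List.mem_ofFn] at hx
    obtain ⟨i, rfl⟩ := hx
    have := hα (α.get i) (α.get_mem _)
    omega
  · by_cases h : c (Fin.last α.length) = 0
    · rw [if_pos h] at hx
      exact absurd hx List.not_mem_nil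
    · rw [if_neg h, List.mem_singleton] at hx
      subst hx
      omega

end PieriAux

namespace PieriAux

lemma map_coe (l : List ℕ) :
    (l.map fun n => (n : ℤ)) = List.map (fun n : ℕ => (n : ℤ)) l := by
  induction l with
  | nil => rfl
  | cons a t ih => simp_all

variable (α : List ℕ)

lemma Imm_phi (c : Fin (α.length + 1) → ℕ) :
    Imm ((phi α c).map (fun n => (n : ℤ)))
      = ImmF (α.length + 1)
          (fun i => gpad (fun j : Fin α.length => (α.get j : ℤ)) i + (c i : ℤ)) := by
  rw [map_coe]
  by_cases h : c (Fin.last α.length) = 0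
  · have hphi : phi α c = List.ofFn (fun i : Fin α.length => α.get i + c i.castSucc) := by
      rw [phi, if_pos h, List.append_nil]
    rw [hphi, List.map_ofFn, Imm_ofFn,
      ImmF_pad _ (by rw [gpad_last, h]; simp)]
    refine congrArg (ImmF α.length) (funext fun i => ?_)
    show ((α.get i + c i.castSucc : ℕ) : ℤ) = gpad _ i.castSucc + (c i.castSucc : ℤ)
    rw [gpad_castSucc]
    push_cast
    ring
  · have hphi : phi α c = List.ofFn
        (fun i : Fin (α.length + 1) =>
          Fin.lastCases (c (Fin.last α.length))
            (fun j : Fin α.length => α.get j + c j.castSucc) i) := by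
      rw [List.ofFn_succ']
      rw [phi, if_neg h, List.concat_eq_append]
      congr 1
      · refine congrArg List.ofFn (funext fun j => ?_)
        rw [Fin.lastCases_castSucc]
      · rw [Fin.lastCases_last]
    rw [hphi, List.map_ofFn, Imm_ofFn]
    refine congrArg (ImmF (α.length + 1)) (funext fun i => ?_)
    refine Fin.lastCases ?_ (fun j => ?_) i
    · show ((Fin.lastCases (motive := fun _ => ℕ) (c (Fin.last α.length))
          (fun j : Fin α.length => α.get j + c j.castSucc) (Fin.last α.length) : ℕ) : ℤ) = _
      rw [Fin.lastCases_last, gpad_last]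
      ring
    · show ((Fin.lastCases (motive := fun _ => ℕ) (c (Fin.last α.length))
          (fun j : Fin α.length => α.get j + c j.castSucc) j.castSucc : ℕ) : ℤ) = _
      rw [Fin.lastCases_castSucc, gpad_castSucc]
      push_cast
      ring

lemma psi_phi (c : Fin (α.length + 1) → ℕ) (i : Fin (α.length + 1)) :
    (phi α c).getD i 0 - α.getD i 0 = c i := by
  by_cases hi : (i : ℕ) < α.length
  · rw [phi_getD_lt α c i hi, List.getD_eq_getElem _ _ hi]
    have h0 : (⟨(i : ℕ), hi⟩ : Fin α.length).castSucc = i := by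
      apply Fin.ext
      rfl
    rw [h0]
    have : α[(i : ℕ)] = α.get ⟨(i : ℕ), hi⟩ := rfl
    omega
  · have hieq : i = Fin.last α.length := by
      apply Fin.ext
      have := i.isLt
      simp only [Fin.val_last]
      omega
    subst hieq
    rw [Fin.val_last, phi_getD_last, List.getD_eq_default _ _ (le_refl _)]
    omega

lemma phi_inj (s : ℕ) :
    Set.InjOn (phi α) ↑(Finset.Nat.antidiagonalTuple (α.length + 1) s) := by
  intro c1 _ c2 _ h
  funext i
  rw [← psi_phi α c1 i, ← psi_phi α c2 i, h]

lemma mem_iff (hα : IsComp α) {s : ℕ} (hs : 0 < s) (β : List ℕ) :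
    (IsComp β ∧ β.sum = α.sum + s ∧
        (∀ j < α.length, α.getD j 0 ≤ β.getD j 0) ∧ β.length ≤ α.length + 1)
      ↔ β ∈ (Finset.Nat.antidiagonalTuple (α.length + 1) s).image (phi α) := by
  constructor
  · rintro ⟨hcomp, hsum, hge, hlen⟩
    have hlen2 : α.length ≤ β.length := by
      by_contra hcon
      push_neg at hcon
      have h1 := hge β.length hcon
      rw [List.getD_eq_default _ _ (le_refl _)] at h1
      have h2 : 0 < α.getD β.length 0 := by
        rw [List.getD_eq_getElem _ _ hcon]
        exact hα _ (List.getElem_mem _)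
      omega
    set c : Fin (α.length + 1) → ℕ := fun i => β.getD i 0 - α.getD i 0 with hc
    have hpt : ∀ i : Fin (α.length + 1), c i + α.getD i 0 = β.getD i 0 := by
      intro i
      by_cases hi : (i : ℕ) < α.length
      · have := hge i hi
        rw [hc]
        dsimp only
        omega
      · have h5 : α.getD i 0 = 0 := List.getD_eq_default _ _ (by omega)
        rw [hc]
        dsimp only
        rw [h5]
        omega
    have hsumc : ∑ i, c i = s := by
      have h1 : ∑ i : Fin (α.length+1), (c i + α.getD i 0)
          = ∑ i : Fin (α.length+1), β.getD i 0 :=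
        Finset.sum_congr rfl fun i _ => hpt i
      rw [Finset.sum_add_distrib, sum_getD_fin β (α.length+1) hlen,
        sum_getD_fin α (α.length+1) (by omega)] at h1
      omega
    rw [Finset.mem_image]
    refine ⟨c, Finset.Nat.mem_antidiagonalTuple.2 hsumc, ?_⟩
    have hclast : c (Fin.last α.length) = β.getD α.length 0 := by
      have h3 : α.getD ((Fin.last α.length : Fin (α.length+1)) : ℕ) 0 = 0 :=
        List.getD_eq_default _ _ (by simp [Fin.val_last])
      have h4 := hpt (Fin.last α.length)
      rw [h3] at h4
      simpa [Fin.val_last] using h4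
    apply eq_of_getD
    · rw [phi_length]
      by_cases hb : β.length = α.length
      · rw [if_pos ?_]
        · omega
        · rw [hclast, List.getD_eq_default _ _ (by omega)]
      · have hb1 : β.length = α.length + 1 := by omega
        rw [if_neg ?_]
        · omega
        · rw [hclast]
          intro hcon
          have hmem : β.getD α.length 0 ∈ β := by
            rw [List.getD_eq_getElem _ _ (by omega)]
            exact List.getElem_mem _
          have := hcomp _ hmem
          omega
    · intro j
      rcases lt_trichotomy j α.length with hj | hj | hj
      · rw [phi_getD_lt α c j hj]
        have h1 := hpt ((⟨j, hj⟩ : Fin α.length).castSucc)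
        have h2 : ((⟨j, hj⟩ : Fin α.length).castSucc : ℕ) = j := rfl
        rw [h2] at h1
        have h3 : α.getD j 0 = α.get ⟨j, hj⟩ := by
          rw [List.getD_eq_getElem _ _ hj]
          rfl
        omega
      · subst hj
        rw [phi_getD_last, hclast]
      · rw [phi_getD_gt α c j (by omega), List.getD_eq_default _ _ (by omega)]
  · rw [Finset.mem_image]
    rintro ⟨c, hc, rfl⟩
    have hcs := Finset.Nat.mem_antidiagonalTuple.1 hc
    refine ⟨phi_isComp α hα c, phi_sum α s c hcs, ?_, ?_⟩
    · intro j hj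
      rw [phi_getD_lt α c j hj, List.getD_eq_getElem _ _ hj]
      have : α[j] = α.get ⟨j, hj⟩ := rfl
      omega
    · rw [phi_length]
      split <;> omega

end PieriAux


open PieriAux in
/-- **Right Pieri rule for immaculate functions.** -/
theorem immaculate_pieri (α : List ℕ) (hα : IsComp α) (s : ℕ) (hs : 0 < s) :
    Imm (α.map fun n => (n : ℤ)) * H (s : ℤ) =
      ∑ᶠ (β : List ℕ) (_ : IsComp β ∧ β.sum = α.sum + s ∧
          (∀ j < α.length, α.getD j 0 ≤ β.getD j 0) ∧ β.length ≤ α.length + 1),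
        Imm (β.map fun n => (n : ℤ)) := by
  classical
  rw [finsum_cond_eq_sum_of_cond_iff _ (fun {β} _ => mem_iff α hα hs β)]
  rw [Finset.sum_image (fun c hc c' hc' h => phi_inj α s hc hc' h)]
  rw [Finset.sum_congr rfl (fun c _ => Imm_phi α c)]
  rw [core (fun j : Fin α.length => (α.get j : ℤ)) s]
  congr 1
  rw [map_coe]
  rw [Imm_eq_ImmF]
  refine ImmF_congr (List.length_map _).symm _ _ (fun i => ?_)
  simp [List.get_eq_getElem, List.getElem_map]

end
end

section
/- For every integer sequence α ∈ ℤ^m and every composition β, M_β^⊥(𝔖_α) = Σ_γ 𝔖_γ, where the sum is over all integer sequences γ ∈ ℤ^m such that every entry of α − γ is nonnegative and the nonzero entries of α − γ, read in order, are exactly β_1, β_2, …, β_{ℓ(β)}. -/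
open scoped BigOperators

noncomputable section

lemma H_neg {n : ℤ} (h : n < 0) : H n = 0 := by
  unfold H; rw [dif_neg (by omega), if_neg (by omega)]

lemma H_zero : H 0 = 1 := by unfold H; simp

/-- Candidate `γ`'s. -/
def cands : List ℤ → List ℕ → Finset (List ℤ)
  | [], [] => {[]}
  | [], _ :: _ => ∅
  | n :: a, [] => (cands a []).image (n :: ·)
  | n :: a, b :: rest =>
      (cands a (b :: rest)).image (n :: ·) ∪ (cands a rest).image (((n - b) :: ·))

def Pprop (a : List ℤ) (β : List ℕ) (γ : List ℤ) : Prop :=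
  γ.length = a.length ∧ (∀ x ∈ List.zipWith (· - ·) a γ, (0 : ℤ) ≤ x) ∧
  (List.zipWith (· - ·) a γ).filter (fun x => decide (x ≠ 0)) = β.map fun n => (n : ℤ)

lemma mem_cands : ∀ (a : List ℤ) (β : List ℕ), IsComp β → ∀ γ : List ℤ,
    (γ ∈ cands a β ↔ Pprop a β γ)
  | [], [], _, γ => by
      constructor
      · intro h
        simp only [cands, Finset.mem_singleton] at h
        subst h; exact ⟨rfl, by simp, by simp⟩
      · rintro ⟨h1, _, _⟩
        simp only [cands, Finset.mem_singleton]
        exact List.length_eq_zero_iff.mp h1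
  | [], b :: rest, _, γ => by
      constructor
      · intro h; simp [cands] at h
      · rintro ⟨h1, _, h3⟩
        rw [List.length_eq_zero_iff.mp h1] at h3
        simp at h3
  | n :: a, β, hβ, [] => by
      constructor
      · intro h
        cases β <;> simp [cands] at h
      · rintro ⟨h1, _, _⟩; simp at h1
  | n :: a, [], hβ, c :: γ => by
      have ih := mem_cands a [] (by intro x hx; simp at hx) γ
      simp only [cands, Finset.mem_image]
      constructor
      · rintro ⟨γ', hγ', heq⟩
        obtain ⟨rfl, rfl⟩ := List.cons_eq_cons.mp heq.symm
        obtain ⟨h1, h2, h3⟩ := ih.mp hγ'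
        refine ⟨by simpa using h1, ?_, ?_⟩
        · intro x hx
          simp only [List.zipWith_cons_cons, List.mem_cons] at hx
          rcases hx with rfl | hx
          · omega
          · exact h2 x hx
        · simp only [List.zipWith_cons_cons, List.filter_cons, List.map_nil] at *
          simpa using h3
      · rintro ⟨h1, h2, h3⟩
        simp only [List.zipWith_cons_cons, List.filter_cons, List.map_nil] at h3
        by_cases hc : n - c = 0
        · refine ⟨γ, ih.mpr ⟨by simpa using h1, fun x hx => h2 x (by simp [hx]), ?_⟩, by
            have : c = n := by omega
            rw [this]⟩
          simpa [hc] using h3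
        · simp [hc] at h3
  | n :: a, b :: rest, hβ, c :: γ => by
      have hb : 0 < b := hβ b (by simp)
      have ih1 := mem_cands a (b :: rest) hβ γ
      have ih2 := mem_cands a rest (fun x hx => hβ x (by simp [hx])) γ
      simp only [cands, Finset.mem_union, Finset.mem_image]
      constructor
      · rintro (⟨γ', hγ', heq⟩ | ⟨γ', hγ', heq⟩)
        · obtain ⟨rfl, rfl⟩ := List.cons_eq_cons.mp heq.symm
          obtain ⟨h1, h2, h3⟩ := ih1.mp hγ'
          refine ⟨by simpa using h1, ?_, ?_⟩
          · intro x hx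
            simp only [List.zipWith_cons_cons, List.mem_cons] at hx
            rcases hx with rfl | hx
            · omega
            · exact h2 x hx
          · simp only [List.zipWith_cons_cons, List.filter_cons]
            simpa using h3
        · obtain ⟨rfl, rfl⟩ := List.cons_eq_cons.mp heq.symm
          obtain ⟨h1, h2, h3⟩ := ih2.mp hγ'
          refine ⟨by simpa using h1, ?_, ?_⟩
          · intro x hx
            simp only [List.zipWith_cons_cons, List.mem_cons] at hx
            rcases hx with rfl | hx
            · omega
            · exact h2 x hx
          · have hbb : n - (n - (b:ℤ)) = (b:ℤ) := by ring
            have hbne : ((b:ℤ)) ≠ 0 := by exact_mod_cast hb.ne'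
            simp only [List.zipWith_cons_cons, hbb, List.filter_cons, List.map_cons]
            rw [if_pos (by simpa using hbne), h3]
            simp
      · rintro ⟨h1, h2, h3⟩
        simp only [List.zipWith_cons_cons, List.filter_cons, List.map_cons] at h3
        by_cases hc : n - c = 0
        · left
          refine ⟨γ, ih1.mpr ⟨by simpa using h1, fun x hx => h2 x (by simp [hx]), ?_⟩, by
            have : c = n := by omega
            rw [this]⟩
          simpa [hc] using h3
        · right
          rw [if_pos (by simpa using hc)] at h3
          obtain ⟨hd, h3'⟩ := List.cons_eq_cons.mp h3
          have hd' : n - c = (b:ℤ) := by simpa using hd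
          refine ⟨γ, ih2.mpr ⟨by simpa using h1, fun x hx => h2 x (by simp [hx]), h3'⟩, ?_⟩
          have : c = n - (b:ℤ) := by omega
          rw [this]
lemma sum_image_cons (c : ℤ) (s : Finset (List ℤ)) (f : List ℤ → NSym) :
    ∑ γ ∈ s.image (c :: ·), f γ = ∑ γ ∈ s, f (c :: γ) :=
  Finset.sum_image (fun x _ y _ h => (List.cons_eq_cons.mp h).2)

lemma disj_image_cons {c d : ℤ} (h : c ≠ d) (s t : Finset (List ℤ)) :
    Disjoint (s.image (c :: ·)) (t.image (d :: ·)) := by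
  rw [Finset.disjoint_left]
  rintro x hx hy
  simp only [Finset.mem_image] at hx hy
  obtain ⟨u, _, rfl⟩ := hx
  obtain ⟨v, _, heq⟩ := hy
  exact h ((List.cons_eq_cons.mp heq).1).symm

lemma Mp_prod (Mp : List ℕ → NSym →ₗ[ℚ] NSym) (hMp : MperpAxioms Mp) (a : List ℤ) :
    ∀ (β : List ℕ), IsComp β →
      Mp β ((a.map H).prod) = ∑ γ ∈ cands a β, (γ.map H).prod := by
  induction a with
  | nil =>
      rintro (_ | ⟨b, rest⟩) hβ
      · simp [cands, hMp.1]
      · have := hMp.2.1 (b :: rest) hβ (by simp)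
        simpa [cands] using this
  | cons n a ih =>
      intro β hβ
      rcases lt_trichotomy n 0 with hn | hn | hn
      · rw [List.map_cons, List.prod_cons, H_neg hn, zero_mul, map_zero]
        symm
        apply Finset.sum_eq_zero
        intro γ hγ
        cases β with
        | nil =>
            simp only [cands, Finset.mem_image] at hγ
            obtain ⟨γ', _, rfl⟩ := hγ
            simp [H_neg hn]
        | cons b rest =>
            have hb : 0 < b := hβ b (by simp)
            simp only [cands, Finset.mem_union, Finset.mem_image] at hγ
            rcases hγ with ⟨γ', _, rfl⟩ | ⟨γ', _, rfl⟩
            · simp [H_neg hn]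
            · simp [H_neg (show n - (b:ℤ) < 0 by omega)]
      · subst hn
        rw [List.map_cons, List.prod_cons, H_zero, one_mul]
        cases β with
        | nil =>
            rw [ih [] hβ]
            rw [show cands (0 :: a) [] = (cands a []).image ((0:ℤ) :: ·) from rfl,
              sum_image_cons]
            apply Finset.sum_congr rfl
            intro γ _
            simp [H_zero]
        | cons b rest =>
            have hb : 0 < b := hβ b (by simp)
            have hrest : IsComp rest := fun x hx => hβ x (by simp [hx])
            rw [show cands (0 :: a) (b :: rest)
                = (cands a (b :: rest)).image ((0:ℤ) :: ·)
                  ∪ (cands a rest).image (((0:ℤ) - b) :: ·) from rfl]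
            rw [Finset.sum_union (disj_image_cons (by omega) _ _), sum_image_cons,
              sum_image_cons]
            have h2 : ∑ γ ∈ cands a rest, ((((0:ℤ) - (b:ℤ)) :: γ).map H).prod = 0 := by
              apply Finset.sum_eq_zero
              intro γ _
              rw [List.map_cons, List.prod_cons,
                show ((0:ℤ) - b) = -(b:ℤ) by ring, H_neg (by omega), zero_mul]
            rw [h2, add_zero, ih (b :: rest) hβ]
            apply Finset.sum_congr rfl
            intro γ _
            simp [H_zero]
      · -- n > 0
        lift n to ℕ using hn.le with m hm
        have hm1 : 1 ≤ m := by exact_mod_cast hn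
        cases β with
        | nil =>
            rw [show cands ((m:ℤ) :: a) [] = (cands a []).image ((m:ℤ) :: ·) from rfl,
              sum_image_cons]
            simp only [List.map_cons, List.prod_cons]
            rw [hMp.1]
            simp only [LinearMap.id_coe, id_eq]
            rw [← Finset.mul_sum, ← ih [] hβ, hMp.1]
            rfl
        | cons b rest =>
            have hb : 0 < b := hβ b (by simp)
            have hrest : IsComp rest := fun x hx => hβ x (by simp [hx])
            rw [List.map_cons, List.prod_cons,
              hMp.2.2 b rest hb hrest m hm1 ((a.map H).prod),
              ih rest hrest, ih (b :: rest) hβ]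
            rw [show cands ((m:ℤ) :: a) (b :: rest)
                = (cands a (b :: rest)).image ((m:ℤ) :: ·)
                  ∪ (cands a rest).image ((((m:ℤ) - b)) :: ·) from rfl]
            rw [Finset.sum_union (disj_image_cons (by omega) _ _), sum_image_cons,
              sum_image_cons]
            rw [Finset.mul_sum, Finset.mul_sum]
            rw [add_comm]
            congr 1 <;> exact Finset.sum_congr rfl fun γ _ => by simp
noncomputable def ImmN (n : ℕ) (γ : List ℤ) : NSym :=
  ∑ σ : Equiv.Perm (Fin n),
    (Equiv.Perm.sign σ : ℤ) •
      (List.ofFn fun i : Fin n =>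
        H (γ.getD i 0 + ((σ i : ℕ) : ℤ) - ((i : ℕ) : ℤ))).prod

lemma Imm_eq_ImmN (γ : List ℤ) (n : ℕ) (h : γ.length = n) : Imm γ = ImmN n γ := by
  subst h
  unfold Imm ImmN
  apply Finset.sum_congr rfl
  intro σ _
  congr 2
  refine congrArg List.ofFn (funext fun i => ?_)
  rw [List.getD_eq_getElem γ 0 i.isLt, List.get_eq_getElem]

def shift {n : ℕ} (σ : Equiv.Perm (Fin n)) (γ : List ℤ) : List ℤ :=
  List.ofFn fun i : Fin n => γ.getD i 0 + ((σ i : ℕ) : ℤ) - ((i : ℕ) : ℤ)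

def unshift {n : ℕ} (σ : Equiv.Perm (Fin n)) (γ : List ℤ) : List ℤ :=
  List.ofFn fun i : Fin n => γ.getD i 0 - ((σ i : ℕ) : ℤ) + ((i : ℕ) : ℤ)

lemma shift_length {n : ℕ} (σ : Equiv.Perm (Fin n)) (γ : List ℤ) :
    (shift σ γ).length = n := by simp [shift]

lemma unshift_length {n : ℕ} (σ : Equiv.Perm (Fin n)) (γ : List ℤ) :
    (unshift σ γ).length = n := by simp [unshift]

lemma shift_unshift {n : ℕ} (σ : Equiv.Perm (Fin n)) (γ : List ℤ) (h : γ.length = n) :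
    shift σ (unshift σ γ) = γ := by
  apply List.ext_getElem (by simp [shift, h])
  intro i h1 h2
  have hi : i < n := by simpa [shift] using h1
  simp only [shift, unshift, List.getElem_ofFn]
  rw [List.getD_eq_getElem _ 0 (by simp [unshift]; omega), List.getElem_ofFn]
  rw [List.getD_eq_getElem γ 0 (by omega)]
  ring_nf

lemma unshift_shift {n : ℕ} (σ : Equiv.Perm (Fin n)) (γ : List ℤ) (h : γ.length = n) :
    unshift σ (shift σ γ) = γ := by
  apply List.ext_getElem (by simp [unshift, h])
  intro i h1 h2
  have hi : i < n := by simpa [unshift] using h1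
  simp only [shift, unshift, List.getElem_ofFn]
  rw [List.getD_eq_getElem _ 0 (by simp [shift]; omega), List.getElem_ofFn]
  rw [List.getD_eq_getElem γ 0 (by omega)]
  ring_nf

lemma zip_shift {n : ℕ} (σ : Equiv.Perm (Fin n)) (a γ : List ℤ)
    (ha : a.length = n) (hγ : γ.length = n) :
    List.zipWith (· - ·) (shift σ a) (shift σ γ) = List.zipWith (· - ·) a γ := by
  apply List.ext_getElem (by simp [shift, ha, hγ])
  intro i h1 h2
  have hi : i < n := by simpa [shift] using h1
  rw [List.getElem_zipWith, List.getElem_zipWith]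
  simp only [shift, List.getElem_ofFn]
  rw [List.getD_eq_getElem a 0 (by omega), List.getD_eq_getElem γ 0 (by omega)]
  ring

lemma mem_cands_shift {n : ℕ} (σ : Equiv.Perm (Fin n)) (a : List ℤ) (ha : a.length = n)
    (β : List ℕ) (hβ : IsComp β) (γ : List ℤ) (hγ : γ.length = n) :
    shift σ γ ∈ cands (shift σ a) β ↔ γ ∈ cands a β := by
  rw [mem_cands _ _ hβ, mem_cands _ _ hβ]
  unfold Pprop
  rw [zip_shift σ a γ ha hγ]
  rw [shift_length, shift_length]
  rw [eq_self_iff_true, true_and, ha, hγ, eq_self_iff_true, true_and]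

lemma length_of_mem_cands {a : List ℤ} {β : List ℕ} (hβ : IsComp β) {γ : List ℤ}
    (h : γ ∈ cands a β) : γ.length = a.length := ((mem_cands a β hβ γ).mp h).1

lemma sum_cands_shift {n : ℕ} (σ : Equiv.Perm (Fin n)) (a : List ℤ) (ha : a.length = n)
    (β : List ℕ) (hβ : IsComp β) (f : List ℤ → NSym) :
    ∑ γ' ∈ cands (shift σ a) β, f γ' = ∑ γ ∈ cands a β, f (shift σ γ) := by
  apply Finset.sum_bij' (i := fun γ' _ => unshift σ γ') (j := fun γ _ => shift σ γ)
  · intro γ' hγ'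
    have hl : γ'.length = n := by
      rw [length_of_mem_cands hβ hγ', shift_length]
    have := (mem_cands_shift σ a ha β hβ (unshift σ γ') (unshift_length σ γ')).mp
      (by rwa [shift_unshift σ γ' hl])
    exact this
  · intro γ hγ
    exact (mem_cands_shift σ a ha β hβ γ (by rw [length_of_mem_cands hβ hγ, ha])).mpr hγ
  · intro γ' hγ'
    have hl : γ'.length = n := by
      rw [length_of_mem_cands hβ hγ', shift_length]
    exact shift_unshift σ γ' hl
  · intro γ hγ
    exact unshift_shift σ γ (by rw [length_of_mem_cands hβ hγ, ha])
  · intro γ' hγ'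
    have hl : γ'.length = n := by
      rw [length_of_mem_cands hβ hγ', shift_length]
    rw [shift_unshift σ γ' hl]
/-- `M_β^⊥(𝔖_α) = Σ_γ 𝔖_γ`, summed over integer sequences `γ` of the same length as `α`
with `α − γ` componentwise nonnegative whose nonzero entries, in order, are exactly `β`. -/
theorem Mperp_immaculate (Mp : List ℕ → NSym →ₗ[ℚ] NSym) (hMp : MperpAxioms Mp)
    (α : List ℤ) (β : List ℕ) (hβ : IsComp β) :
    Mp β (Imm α) =
      ∑ᶠ (γ : List ℤ) (_ : γ.length = α.length ∧
          (∀ x ∈ List.zipWith (· - ·) α γ, (0 : ℤ) ≤ x) ∧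
          (List.zipWith (· - ·) α γ).filter (fun x => decide (x ≠ 0))
            = β.map fun n => (n : ℤ)),
        Imm γ := by
  classical
  have hQ : ∀ γ : List ℤ, (γ.length = α.length ∧
      (∀ x ∈ List.zipWith (· - ·) α γ, (0 : ℤ) ≤ x) ∧
      (List.zipWith (· - ·) α γ).filter (fun x => decide (x ≠ 0))
        = β.map fun n => (n : ℤ)) = (γ ∈ cands α β) :=
    fun γ => propext (mem_cands α β hβ γ).symm
  have hRHS : (∑ᶠ (γ : List ℤ) (_ : γ.length = α.length ∧
      (∀ x ∈ List.zipWith (· - ·) α γ, (0 : ℤ) ≤ x) ∧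
      (List.zipWith (· - ·) α γ).filter (fun x => decide (x ≠ 0))
        = β.map fun n => (n : ℤ)), Imm γ) = ∑ γ ∈ cands α β, Imm γ := by
    simp only [hQ]
    exact finsum_mem_finset_eq_sum Imm (cands α β)
  rw [hRHS]
  rw [show Imm α = ∑ σ : Equiv.Perm (Fin α.length),
      (Equiv.Perm.sign σ : ℤ) • (List.ofFn fun i : Fin α.length =>
        H (α.get i + ((σ i : ℕ) : ℤ) - ((i : ℕ) : ℤ))).prod from rfl, map_sum]
  have step1 : ∀ σ : Equiv.Perm (Fin α.length),
      Mp β ((Equiv.Perm.sign σ : ℤ) • (List.ofFn fun i : Fin α.length =>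
          H (α.get i + ((σ i : ℕ) : ℤ) - ((i : ℕ) : ℤ))).prod)
        = (Equiv.Perm.sign σ : ℤ) • ∑ γ ∈ cands α β, ((shift σ γ).map H).prod := by
    intro σ
    rw [map_zsmul]
    congr 1
    have hofn : (List.ofFn fun i : Fin α.length =>
        H (α.get i + ((σ i : ℕ) : ℤ) - ((i : ℕ) : ℤ))) = (shift σ α).map H := by
      rw [shift, List.map_ofFn]
      refine congrArg List.ofFn (funext fun i => ?_)
      simp only [Function.comp]
      rw [List.getD_eq_getElem α 0 i.isLt, List.get_eq_getElem]
    rw [hofn, Mp_prod Mp hMp (shift σ α) β hβ, sum_cands_shift σ α rfl β hβ]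
  rw [Finset.sum_congr rfl (fun σ _ => step1 σ)]
  simp_rw [Finset.smul_sum]
  rw [Finset.sum_comm]
  apply Finset.sum_congr rfl
  intro γ hγ
  rw [Imm_eq_ImmN γ α.length (by rw [length_of_mem_cands hβ hγ])]
  unfold ImmN
  apply Finset.sum_congr rfl
  intro σ _
  congr 1
  rw [shift, List.map_ofFn]
  rfl
end
end

section
/- (Commutation of M_β^⊥ with the creation operators.) For every nonempty composition β and every m ∈ ℤ, the following identity of linear operators on NSym holds: M_β^⊥ ∘ 𝔹_m = 𝔹_{m−β_1} ∘ M_{[β_2,…,β_{ℓ(β)}]}^⊥ + 𝔹_m ∘ M_β^⊥. -/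
open scoped BigOperators

noncomputable section

lemma H_pnat (a : ℕ+) : H ((a : ℕ) : ℤ) = FreeAlgebra.ι ℚ a := by
  unfold H
  rw [dif_pos (by exact_mod_cast a.pos)]
  congr

def ofList (l : List ℕ+) : NSym := (l.map (FreeAlgebra.ι ℚ)).prod

lemma ofList_cons (a : ℕ+) (l : List ℕ+) : ofList (a :: l) = FreeAlgebra.ι ℚ a * ofList l := by
  simp [ofList]

lemma span_ofList : Submodule.span ℚ (Set.range ofList) = ⊤ := by
  rw [eq_top_iff]
  intro x _
  have hx : x ∈ Algebra.adjoin ℚ (Set.range (FreeAlgebra.ι ℚ (X := ℕ+))) := by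
    rw [FreeAlgebra.adjoin_range_ι]; trivial
  rw [← Subalgebra.mem_toSubmodule, Algebra.adjoin_eq_span] at hx
  refine Submodule.span_le.2 ?_ hx
  intro y hy
  apply Submodule.subset_span
  induction hy using Submonoid.closure_induction with
  | mem z hz => obtain ⟨a, rfl⟩ := hz; exact ⟨[a], by simp [ofList]⟩
  | one => exact ⟨[], rfl⟩
  | mul u v hu hv ihu ihv =>
      obtain ⟨l, rfl⟩ := ihu
      obtain ⟨l', rfl⟩ := ihv
      exact ⟨l ++ l', by simp [ofList]⟩

lemma nsym_induction (p : NSym → Prop) (hmon : ∀ l : List ℕ+, p (ofList l))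
    (hzero : p 0) (hadd : ∀ x y, p x → p y → p (x + y))
    (hsmul : ∀ (c : ℚ) (x), p x → p (c • x)) : ∀ x, p x := by
  intro x
  have hx : x ∈ Submodule.span ℚ (Set.range ofList) := by rw [span_ofList]; trivial
  induction hx using Submodule.span_induction with
  | mem z hz => obtain ⟨l, rfl⟩ := hz; exact hmon l
  | zero => exact hzero
  | add u v _ _ ihu ihv => exact hadd u v ihu ihv
  | smul c u _ ihu => exact hsmul c u ihu

variable {Mp : List ℕ → NSym →ₗ[ℚ] NSym}

lemma MpA (hMp : MperpAxioms Mp) {b : ℕ} {rest : List ℕ} (hb : 0 < b)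
    (hrest : IsComp rest) (n : ℤ) (x : NSym) :
    Mp (b :: rest) (H n * x) = H (n - b) * Mp rest x + H n * Mp (b :: rest) x := by
  rcases lt_trichotomy n 0 with h | h | h
  · rw [H_neg h, H_neg (by omega : n - (b : ℤ) < 0)]
    simp
  · subst h
    rw [H_zero, H_neg (show (0:ℤ) - (b:ℤ) < 0 by omega)]
    simp
  · have hn : ((n.toNat : ℤ)) = n := Int.toNat_of_nonneg h.le
    rw [← hn]
    exact hMp.2.2 b rest hb hrest n.toNat (by omega) x

lemma IsComp.tail {b : ℕ} {rest : List ℕ} (h : IsComp (b :: rest)) : IsComp rest :=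
  fun x hx => h x (List.mem_cons_of_mem _ hx)

lemma Mp_comm (hMp : MperpAxioms Mp) :
    ∀ x : NSym, ∀ β γ : List ℕ, IsComp β → IsComp γ →
      Mp β (Mp γ x) = Mp γ (Mp β x) := by
  apply nsym_induction
  · intro l
    induction l with
    | nil =>
        intro β γ hβ hγ
        rcases β with _ | ⟨b, β'⟩
        · simp [hMp.1]
        rcases γ with _ | ⟨c, γ'⟩
        · simp [hMp.1]
        rw [show ofList [] = (1 : NSym) from rfl,
          hMp.2.1 _ hγ (by simp), hMp.2.1 _ hβ (by simp), map_zero, map_zero]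
    | cons a l ih =>
        intro β γ hβ hγ
        rcases β with _ | ⟨b, β'⟩
        · simp [hMp.1]
        rcases γ with _ | ⟨c, γ'⟩
        · simp [hMp.1]
        have hb : 0 < b := hβ b (by simp)
        have hc : 0 < c := hγ c (by simp)
        have hβ' := hβ.tail
        have hγ' := hγ.tail
        rw [ofList_cons, ← H_pnat]
        rw [MpA hMp hc hγ', MpA hMp hb hβ', map_add, map_add,
          MpA hMp hb hβ', MpA hMp hb hβ', MpA hMp hc hγ', MpA hMp hc hγ']
        rw [ih β' γ' hβ' hγ', ih (b :: β') γ' hβ hγ', ih β' (c :: γ') hβ' hγ,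
          ih (b :: β') (c :: γ') hβ hγ]
        rw [show ((a : ℕ) : ℤ) - c - b = ((a : ℕ) : ℤ) - b - c by ring]
        abel
  · intro β γ _ _; simp
  · intro x y hx hy β γ hβ hγ
    simp [map_add, hx β γ hβ hγ, hy β γ hβ hγ]
  · intro c x hx β γ hβ hγ
    simp [map_smul, hx β γ hβ hγ]

lemma Mp_vanish_mon (hMp : MperpAxioms Mp) :
    ∀ l : List ℕ+, ∀ β : List ℕ, IsComp β → l.length < β.length →
      Mp β (ofList l) = 0 := by
  intro l
  induction l with
  | nil =>
      intro β hβ hlen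
      exact hMp.2.1 β hβ (by rintro rfl; simp at hlen)
  | cons a l ih =>
      intro β hβ hlen
      rcases β with _ | ⟨c, β'⟩
      · simp at hlen
      have hc : 0 < c := hβ c (by simp)
      rw [ofList_cons, ← H_pnat, MpA hMp hc hβ.tail,
        ih β' hβ.tail (by simpa using hlen),
        ih (c :: β') hβ (by simp at hlen ⊢; omega)]
      simp

lemma Mp_vanish (hMp : MperpAxioms Mp) :
    ∀ x : NSym, ∃ N : ℕ, ∀ β : List ℕ, IsComp β → N ≤ β.length → Mp β x = 0 := by
  apply nsym_induction
  · intro l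
    exact ⟨l.length + 1, fun β hβ hlen => Mp_vanish_mon hMp l β hβ (by omega)⟩
  · exact ⟨0, fun β _ _ => map_zero _⟩
  · rintro x y ⟨N, hN⟩ ⟨M, hM⟩
    exact ⟨max N M, fun β hβ hlen => by
      rw [map_add, hN β hβ (le_trans (le_max_left _ _) hlen),
        hM β hβ (le_trans (le_max_right _ _) hlen), add_zero]⟩
  · rintro c x ⟨N, hN⟩
    exact ⟨N, fun β hβ hlen => by rw [map_smul, hN β hβ hlen, smul_zero]⟩

lemma isComp_replicate (i : ℕ) : IsComp (List.replicate i 1) := by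
  intro x hx
  rw [List.eq_of_mem_replicate hx]
  exact one_pos

lemma supp_fin (hMp : MperpAxioms Mp) (m : ℤ) (x : NSym) :
    (Function.support fun i : ℕ =>
      (-1 : ℤ) ^ i • (H (m + (i : ℤ)) * Mp (List.replicate i 1) x)).Finite := by
  obtain ⟨N, hN⟩ := Mp_vanish hMp x
  apply Set.Finite.subset (Set.finite_Iio N)
  intro i hi
  simp only [Set.mem_Iio]
  by_contra hcon
  apply hi
  show (-1 : ℤ) ^ i • (H (m + (i : ℤ)) * Mp (List.replicate i 1) x) = 0
  rw [hN (List.replicate i 1) (isComp_replicate i) (by simp only [List.length_replicate]; omega)]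
  simp


/-- **Commutation of `M_β^⊥` with the creation operators.**
`M_β^⊥ ∘ 𝔹_m = 𝔹_{m−β_1} ∘ M_{[β_2,…]}^⊥ + 𝔹_m ∘ M_β^⊥`. -/
theorem Mperp_comp_Bop (Mp : List ℕ → NSym →ₗ[ℚ] NSym) (hMp : MperpAxioms Mp)
    (b : ℕ) (rest : List ℕ) (hb : 0 < b) (hrest : IsComp rest) (m : ℤ) (x : NSym) :
    Mp (b :: rest) (Bop Mp m x) =
      Bop Mp (m - (b : ℤ)) (Mp rest x) + Bop Mp m (Mp (b :: rest) x) := by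
  have hbc : IsComp (b :: rest) := by
    intro y hy
    rcases List.mem_cons.1 hy with rfl | h
    · exact hb
    · exact hrest y h
  have hterm : ∀ i : ℕ,
      Mp (b :: rest) ((-1:ℤ)^i • (H (m + (i:ℤ)) * Mp (List.replicate i 1) x))
      = (-1:ℤ)^i • (H (m - (b:ℤ) + (i:ℤ)) * Mp (List.replicate i 1) (Mp rest x))
        + (-1:ℤ)^i • (H (m + (i:ℤ)) * Mp (List.replicate i 1) (Mp (b :: rest) x)) := by
    intro i
    rw [map_zsmul, MpA hMp hb hrest,
      Mp_comm hMp x rest (List.replicate i 1) hrest (isComp_replicate i),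
      Mp_comm hMp x (b :: rest) (List.replicate i 1) hbc (isComp_replicate i),
      show m + (i:ℤ) - b = m - b + i by ring, smul_add]
  calc Mp (b :: rest) (Bop Mp m x)
      = ∑ᶠ i : ℕ, Mp (b :: rest) ((-1:ℤ)^i • (H (m + (i:ℤ)) * Mp (List.replicate i 1) x)) := by
        rw [Bop]
        exact AddMonoidHom.map_finsum (Mp (b :: rest)).toAddMonoidHom (supp_fin hMp m x)
    _ = ∑ᶠ i : ℕ, ((-1:ℤ)^i • (H (m - (b:ℤ) + (i:ℤ)) * Mp (List.replicate i 1) (Mp rest x))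
        + (-1:ℤ)^i • (H (m + (i:ℤ)) * Mp (List.replicate i 1) (Mp (b :: rest) x))) :=
        finsum_congr hterm
    _ = _ := by
        rw [finsum_add_distrib (supp_fin hMp (m - (b:ℤ)) (Mp rest x))
          (supp_fin hMp m (Mp (b :: rest) x))]
        rfl
end
end

section
/- (Creation operator construction of the immaculate functions.) For every integer sequence α = (α_1, …, α_m) ∈ ℤ^m, 𝔹_{α_1} ∘ 𝔹_{α_2} ∘ ⋯ ∘ 𝔹_{α_m} applied to 1 equals 𝔖_α. -/
open scoped BigOperators

noncomputable section

theorem Equiv.Perm.apply_inv_self {α : Type*} (f : Equiv.Perm α) (x : α) : f (f⁻¹ x) = x :=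
  Equiv.apply_symm_apply f x

theorem Equiv.Perm.inv_apply_self {α : Type*} (f : Equiv.Perm α) (x : α) : f⁻¹ (f x) = x :=
  Equiv.symm_apply_apply f x

namespace CreationAux

lemma H_neg {n : ℤ} (h : n < 0) : H n = 0 := by
  unfold H; rw [dif_neg (by omega), if_neg (by omega)]

lemma H_zero : H 0 = 1 := by unfold H; simp

def bti (b : Bool) : ℤ := if b then 1 else 0

def wt {n : ℕ} (δ : Fin n → Bool) : ℕ := ∑ j, if δ j then 1 else 0

lemma wt_le {n : ℕ} (δ : Fin n → Bool) : wt δ ≤ n := by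
  classical
  calc wt δ ≤ ∑ _j : Fin n, 1 := Finset.sum_le_sum (fun j _ => by by_cases h : δ j <;> simp [h])
  _ = n := by simp

lemma wt_cons {n : ℕ} (b : Bool) (δ : Fin n → Bool) :
    wt (Fin.cons b δ) = (if b then 1 else 0) + wt δ := by
  classical
  unfold wt
  rw [Fin.sum_univ_succ]
  simp

lemma wt_eq_zero {n : ℕ} {δ : Fin n → Bool} (h : wt δ = 0) : δ = fun _ => false := by
  classical
  funext j
  by_contra hj
  have hj' : δ j = true := by simpa using hj
  have : (1 : ℕ) ≤ wt δ := by
    unfold wt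
    calc (1:ℕ) = if δ j then 1 else 0 := by simp [hj']
    _ ≤ _ := Finset.single_le_sum (f := fun j => if δ j then (1:ℕ) else 0)
        (fun i _ => by positivity) (Finset.mem_univ j)
  omega

lemma sum_pi_bool_succ {M : Type*} [AddCommMonoid M] {n : ℕ} (g : (Fin (n+1) → Bool) → M) :
    ∑ δ : Fin (n+1) → Bool, g δ = ∑ b : Bool, ∑ δ : Fin n → Bool, g (Fin.cons b δ) := by
  classical
  rw [show (∑ b : Bool, ∑ δ : Fin n → Bool, g (Fin.cons b δ))
      = ∑ p : Bool × (Fin n → Bool), g (Fin.cons p.1 p.2) from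
      (Fintype.sum_prod_type (fun p : Bool × (Fin n → Bool) => g (Fin.cons p.1 p.2))).symm]
  exact (Fintype.sum_equiv (Fin.consEquiv fun _ => Bool) _ _ (fun p => rfl)).symm

/-- Lemma A: action of `M_{1^i}^⊥` on a product of `H`'s. -/
lemma Mp_prod (Mp : List ℕ → NSym →ₗ[ℚ] NSym) (hMp : MperpAxioms Mp) :
    ∀ (n : ℕ) (f : Fin n → ℤ) (i : ℕ),
    Mp (List.replicate i 1) (List.ofFn fun j => H (f j)).prod
      = ∑ δ : Fin n → Bool, if wt δ = i then (List.ofFn fun j => H (f j - bti (δ j))).prod else 0 := by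
  classical
  obtain ⟨h1, h2, h3⟩ := hMp
  have hcomp : ∀ i : ℕ, IsComp (List.replicate i 1) := by
    intro i x hx
    have := List.eq_of_mem_replicate hx
    omega
  intro n
  induction n with
  | zero =>
    intro f i
    have huniv : (Finset.univ : Finset (Fin 0 → Bool)) = {fun _ => false} := by
      apply Finset.eq_singleton_iff_unique_mem.2
      exact ⟨Finset.mem_univ _, fun x _ => funext fun j => j.elim0⟩
    rw [huniv, Finset.sum_singleton]
    have hwt : wt (fun _ : Fin 0 => false) = 0 := by simp [wt]
    cases i with
    | zero =>
      simp only [List.replicate, h1, hwt, if_pos rfl]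
      simp
    | succ i =>
      rw [if_neg (by omega)]
      simp only [List.ofFn_zero, List.prod_nil]
      exact h2 _ (hcomp _) (by simp)
  | succ n IH =>
    intro f i
    rw [List.ofFn_succ, List.prod_cons, sum_pi_bool_succ]
    have hsplitT : ∀ δ : Fin n → Bool,
        (if wt (Fin.cons true δ) = i
          then (List.ofFn fun j => H (f j - bti ((Fin.cons true δ : Fin (n+1) → Bool) j))).prod else 0)
        = if 1 + wt δ = i then
            H (f 0 - 1) * (List.ofFn fun j : Fin n => H (f j.succ - bti (δ j))).prod else 0 := by
      intro δ
      rw [show wt (Fin.cons true δ) = 1 + wt δ by rw [wt_cons]; simp]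
      congr 1
      rw [List.ofFn_succ, List.prod_cons]
      simp [Fin.cons_succ, bti]
    have hsplitF : ∀ δ : Fin n → Bool,
        (if wt (Fin.cons false δ) = i
          then (List.ofFn fun j => H (f j - bti ((Fin.cons false δ : Fin (n+1) → Bool) j))).prod else 0)
        = if wt δ = i then
            H (f 0) * (List.ofFn fun j : Fin n => H (f j.succ - bti (δ j))).prod else 0 := by
      intro δ
      rw [show wt (Fin.cons false δ) = wt δ by rw [wt_cons]; simp]
      congr 1
      rw [List.ofFn_succ, List.prod_cons]
      simp [Fin.cons_succ, bti]
    rw [Fintype.sum_bool]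
    simp only [hsplitT, hsplitF]
    cases i with
    | zero =>
      rw [List.replicate_zero, h1]
      simp only [LinearMap.id_coe, id_eq]
      have hz : ∀ δ : Fin n → Bool, ¬ (1 + wt δ = 0) := by intro δ; omega
      simp only [hz, if_false, Finset.sum_const_zero, zero_add]
      have hpull : ∀ δ : Fin n → Bool,
          (if wt δ = 0 then H (f 0) * (List.ofFn fun j : Fin n => H (f j.succ - bti (δ j))).prod else 0)
          = H (f 0) * (if wt δ = 0 then (List.ofFn fun j : Fin n => H (f j.succ - bti (δ j))).prod else 0) := by
        intro δ; split <;> simp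
      simp only [hpull]
      rw [← Finset.mul_sum]
      congr 1
      have := IH (fun j => f j.succ) 0
      rw [List.replicate_zero, h1] at this
      simpa using this
    | succ i =>
      have key : Mp (List.replicate (i+1) 1) (H (f 0) * (List.ofFn fun j : Fin n => H (f j.succ)).prod)
          = H (f 0 - 1) * Mp (List.replicate i 1) (List.ofFn fun j : Fin n => H (f j.succ)).prod
            + H (f 0) * Mp (List.replicate (i+1) 1) (List.ofFn fun j : Fin n => H (f j.succ)).prod := by
        rcases lt_trichotomy (f 0) 0 with hneg | hzero | hpos
        · rw [H_neg hneg, H_neg (by omega), zero_mul, zero_mul, zero_mul, map_zero, zero_add]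
        · rw [hzero, H_zero, one_mul, one_mul]
          rw [H_neg (by norm_num), zero_mul, zero_add]
        · have hf : f 0 = ((f 0).toNat : ℤ) := by omega
          have h1n : 1 ≤ (f 0).toNat := by omega
          rw [hf]
          have := h3 1 (List.replicate i 1) (by norm_num) (hcomp i) (f 0).toNat h1n
            (List.ofFn fun j : Fin n => H (f j.succ)).prod
          rw [List.replicate_succ]
          rw [this]
          norm_num
      rw [key, IH _ i, IH _ (i+1), Finset.mul_sum, Finset.mul_sum]
      congr 1
      · apply Finset.sum_congr rfl
        intro δ _
        rw [mul_ite, mul_zero]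
        congr 1
        simp only [eq_iff_iff]; omega
      · apply Finset.sum_congr rfl
        intro δ _
        rw [mul_ite, mul_zero]


lemma collapse {M : Type*} [AddCommMonoid M] {ι : Type*} [Fintype ι] (k : ℕ)
    (F : ι → M) (w : ι → ℕ) (hw : ∀ x, w x ≤ k) :
    ∑ i ∈ Finset.range (k+1), ∑ x : ι, (if w x = i then F x else 0) = ∑ x : ι, F x := by
  classical
  rw [Finset.sum_comm]
  apply Finset.sum_congr rfl
  intro x _
  rw [Finset.sum_ite_eq (Finset.range (k+1)) (w x) (fun _ => F x)]
  rw [if_pos (Finset.mem_range.2 (by have := hw x; omega))]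

/-- The expansion of `Bop` applied to an immaculate function. -/
lemma Bop_Imm_expand (Mp : List ℕ → NSym →ₗ[ℚ] NSym) (hMp : MperpAxioms Mp)
    (m : ℤ) (α : List ℤ) :
    Bop Mp m (Imm α)
      = ∑ p : Equiv.Perm (Fin α.length) × (Fin α.length → Bool),
          (((-1 : ℤ) ^ (wt p.2) * (Equiv.Perm.sign p.1 : ℤ)) •
            (H (m + (wt p.2 : ℤ)) *
              (List.ofFn fun j : Fin α.length =>
                H (α.get j + ((p.1 j : ℕ) : ℤ) - ((j : ℕ) : ℤ) - bti (p.2 j))).prod)) := by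
  classical
  set k := α.length
  have hMpImm : ∀ i : ℕ, Mp (List.replicate i 1) (Imm α)
      = ∑ σ : Equiv.Perm (Fin k), (Equiv.Perm.sign σ : ℤ) •
          ∑ δ : Fin k → Bool, (if wt δ = i then
            (List.ofFn fun j : Fin k =>
              H (α.get j + ((σ j : ℕ) : ℤ) - ((j : ℕ) : ℤ) - bti (δ j))).prod else 0) := by
    intro i
    unfold Imm
    rw [map_sum]
    apply Finset.sum_congr rfl
    intro σ _
    rw [map_zsmul]
    congr 1
    exact Mp_prod Mp hMp k (fun j => α.get j + ((σ j : ℕ) : ℤ) - ((j : ℕ) : ℤ)) i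
  have hper : ∀ i : ℕ, (-1 : ℤ)^i • (H (m + (i : ℤ)) * Mp (List.replicate i 1) (Imm α))
      = ∑ p : Equiv.Perm (Fin k) × (Fin k → Bool),
          (if wt p.2 = i then
            (((-1 : ℤ) ^ (wt p.2) * (Equiv.Perm.sign p.1 : ℤ)) •
              (H (m + (wt p.2 : ℤ)) *
                (List.ofFn fun j : Fin k =>
                  H (α.get j + ((p.1 j : ℕ) : ℤ) - ((j : ℕ) : ℤ) - bti (p.2 j))).prod)) else 0) := by
    intro i
    rw [hMpImm i, Finset.mul_sum, Finset.smul_sum, Fintype.sum_prod_type]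
    apply Finset.sum_congr rfl
    intro σ _
    rw [mul_smul_comm, Finset.mul_sum, Finset.smul_sum, Finset.smul_sum]
    apply Finset.sum_congr rfl
    intro δ _
    by_cases h : wt δ = i
    · rw [if_pos h, if_pos h, ← h, smul_smul]
    · rw [if_neg h, if_neg h]
      simp
  unfold Bop
  have hsupp : (Function.support fun i : ℕ =>
      (-1 : ℤ)^i • (H (m + (i : ℤ)) * Mp (List.replicate i 1) (Imm α)))
      ⊆ (Finset.range (k+1) : Finset ℕ) := by
    intro i hi
    simp only [Function.mem_support] at hi
    by_contra hir
    apply hi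
    have hik : k < i := by
      simp only [Finset.coe_range, Set.mem_Iio] at hir; omega
    rw [hper i]
    apply Finset.sum_eq_zero
    intro p _
    rw [if_neg (by have := wt_le p.2; omega)]
  rw [finsum_eq_sum_of_support_subset _ hsupp,
    ← collapse k _ (fun p : Equiv.Perm (Fin k) × (Fin k → Bool) => wt p.2) (fun p => wt_le p.2)]
  exact Finset.sum_congr rfl (fun i _ => hper i)


open Equiv Equiv.Perm Finset

lemma card_lt_fin (n s : ℕ) (h : s ≤ n) :
    (Finset.univ.filter fun v : Fin n => (v : ℕ) < s).card = s := by
  classical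
  have heq : (Finset.univ.filter fun v : Fin n => (v : ℕ) < s)
      = Finset.attachFin (Finset.range s) (fun m hm => lt_of_lt_of_le (Finset.mem_range.1 hm) h) := by
    ext v
    simp [Finset.mem_attachFin]
  rw [heq, Finset.card_attachFin, Finset.card_range]

lemma wt_eq_card {n : ℕ} (δ : Fin n → Bool) :
    wt δ = (Finset.univ.filter fun j => δ j = true).card := by
  classical
  rw [Finset.card_filter]
  unfold wt
  apply Finset.sum_congr rfl
  intro j _
  by_cases h : δ j <;> simp [h]

lemma card_filter_perm {n : ℕ} (σ : Equiv.Perm (Fin n)) (q : Fin n → Prop) [DecidablePred q] :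
    (Finset.univ.filter fun j => q (σ j)).card = (Finset.univ.filter q).card := by
  classical
  apply Finset.card_bij' (fun j _ => σ j) (fun v _ => σ⁻¹ v)
  · intro j hj; simp only [mem_filter, mem_univ, true_and] at hj ⊢; exact hj
  · intro v hv; simp only [mem_filter, mem_univ, true_and] at hv ⊢; simpa using hv
  · intro j _; simp
  · intro v _; simp

lemma wt_decide {n : ℕ} (σ : Equiv.Perm (Fin n)) (s : ℕ) (hs : s ≤ n) :
    wt (fun j => decide ((σ j : ℕ) < s)) = s := by
  classical
  rw [wt_eq_card]
  have : (Finset.univ.filter fun j => (decide ((σ j : ℕ) < s)) = true)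
      = Finset.univ.filter fun j => (σ j : ℕ) < s := by
    apply Finset.filter_congr; intro j _; simp
  rw [this, card_filter_perm σ (fun v => (v : ℕ) < s), card_lt_fin n s hs]

/-- `wtFin δ` as an element of `Fin (n+1)`. -/
def wtFin {n : ℕ} (δ : Fin n → Bool) : Fin (n+1) := ⟨wt δ, by have := wt_le δ; omega⟩

/-- The permutation in `S_{k+1}` built from `(σ, δ)`. -/
def Psi {n : ℕ} (p : Equiv.Perm (Fin n) × (Fin n → Bool)) : Equiv.Perm (Fin (n+1)) :=
  (Fin.cycleRange (wtFin p.2))⁻¹ * Equiv.Perm.decomposeFin.symm (0, p.1)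

lemma Psi_zero {n : ℕ} (p : Equiv.Perm (Fin n) × (Fin n → Bool)) :
    Psi p 0 = wtFin p.2 := by
  unfold Psi
  rw [Equiv.Perm.mul_apply, Equiv.Perm.decomposeFin_symm_apply_zero]
  exact Fin.cycleRange_symm_zero _

lemma Psi_succ {n : ℕ} (p : Equiv.Perm (Fin n) × (Fin n → Bool)) (j : Fin n) :
    Psi p j.succ = (wtFin p.2).succAbove (p.1 j) := by
  unfold Psi
  rw [Equiv.Perm.mul_apply, Equiv.Perm.decomposeFin_symm_apply_succ]
  simp only [Equiv.swap_self, Equiv.refl_apply]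
  exact Fin.cycleRange_symm_succ _ _

lemma val_succAbove {n : ℕ} (s : Fin (n+1)) (v : Fin n) :
    ((s.succAbove v : Fin (n+1)) : ℕ) = if (v : ℕ) < (s : ℕ) then (v : ℕ) else (v : ℕ) + 1 := by
  rcases lt_or_ge ((v : ℕ)) ((s : ℕ)) with h | h
  · rw [Fin.succAbove_of_castSucc_lt _ _ (by rw [Fin.lt_def, Fin.coe_castSucc]; exact h), if_pos h]
    exact Fin.coe_castSucc v
  · rw [Fin.succAbove_of_le_castSucc _ _ (by rw [Fin.le_def, Fin.coe_castSucc]; exact h),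
      if_neg (by omega)]
    exact Fin.val_succ v

lemma sign_Psi {n : ℕ} (p : Equiv.Perm (Fin n) × (Fin n → Bool)) :
    (Equiv.Perm.sign (Psi p) : ℤ) = (-1 : ℤ) ^ (wt p.2) * (Equiv.Perm.sign p.1 : ℤ) := by
  unfold Psi
  rw [map_mul]
  rw [Equiv.Perm.decomposeFin.symm_sign, if_pos rfl, one_mul]
  have : Equiv.Perm.sign (Fin.cycleRange (wtFin p.2))⁻¹ = (-1) ^ (wt p.2) := by
    rw [map_inv, Fin.sign_cycleRange]
    simp [wtFin]
  rw [this]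
  push_cast
  ring

lemma decomposeFin_fst {n : ℕ} (ρ : Equiv.Perm (Fin (n+1))) :
    (Equiv.Perm.decomposeFin ρ).1 = ρ 0 := by
  have h : Equiv.Perm.decomposeFin.symm
      ((Equiv.Perm.decomposeFin ρ).1, (Equiv.Perm.decomposeFin ρ).2) = ρ := by
    rw [Prod.mk.eta, Equiv.symm_apply_apply]
  conv_rhs => rw [← h]
  rw [Equiv.Perm.decomposeFin_symm_apply_zero]

/-- The inverse map. -/
def Phi {n : ℕ} (π : Equiv.Perm (Fin (n+1))) : Equiv.Perm (Fin n) × (Fin n → Bool) :=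
  ((Equiv.Perm.decomposeFin ((π 0).cycleRange * π)).2,
    fun j => decide ((π j.succ : ℕ) < ((π 0 : ℕ))))

lemma decompose_eq {n : ℕ} (π : Equiv.Perm (Fin (n+1))) :
    Equiv.Perm.decomposeFin.symm (0, (Phi π).1) = (π 0).cycleRange * π := by
  rw [Equiv.symm_apply_eq]
  have h0 : ((π 0).cycleRange * π) 0 = 0 := by
    rw [Equiv.Perm.mul_apply, Fin.cycleRange_self]
  exact Prod.ext (by rw [decomposeFin_fst, h0]) rfl

lemma Phi_fst_succ {n : ℕ} (π : Equiv.Perm (Fin (n+1))) (j : Fin n) :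
    (((Phi π).1 j) : Fin n).succ = (π 0).cycleRange (π j.succ) := by
  have := congrFun (congrArg (fun (e : Equiv.Perm (Fin (n+1))) => (e : Fin (n+1) → Fin (n+1)))
    (decompose_eq π)) j.succ
  simp only [Equiv.Perm.mul_apply] at this
  rw [← this, Equiv.Perm.decomposeFin_symm_apply_succ]
  simp

lemma Phi_fst_lt_iff {n : ℕ} (π : Equiv.Perm (Fin (n+1))) (j : Fin n) :
    (((Phi π).1 j : ℕ) < (π 0 : ℕ)) ↔ ((π j.succ : ℕ) < (π 0 : ℕ)) := by
  have key := congrArg (fun t : Fin (n+1) => (t : ℕ)) (Phi_fst_succ π j)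
  simp only [Fin.val_succ] at key
  have hne : π j.succ ≠ π 0 := fun h => Fin.succ_ne_zero j (π.injective h)
  rcases lt_trichotomy ((π j.succ : ℕ)) ((π 0 : ℕ)) with h | h | h
  · rw [Fin.coe_cycleRange_of_lt (by rw [Fin.lt_def]; exact h)] at key
    omega
  · exact absurd (Fin.ext h) hne
  · rw [Fin.cycleRange_of_gt (by rw [Fin.lt_def]; exact h)] at key
    omega

lemma Phi_fst_val {n : ℕ} (π : Equiv.Perm (Fin (n+1))) (j : Fin n) :
    ((Phi π).1 j : ℕ)
      = if (π j.succ : ℕ) < (π 0 : ℕ) then (π j.succ : ℕ) else (π j.succ : ℕ) - 1 := by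
  have key := congrArg (fun t : Fin (n+1) => (t : ℕ)) (Phi_fst_succ π j)
  simp only [Fin.val_succ] at key
  have hne : π j.succ ≠ π 0 := fun h => Fin.succ_ne_zero j (π.injective h)
  rcases lt_trichotomy ((π j.succ : ℕ)) ((π 0 : ℕ)) with h | h | h
  · rw [Fin.coe_cycleRange_of_lt (by rw [Fin.lt_def]; exact h)] at key
    rw [if_pos h]; omega
  · exact absurd (Fin.ext h) hne
  · rw [Fin.cycleRange_of_gt (by rw [Fin.lt_def]; exact h)] at key
    rw [if_neg (by omega)]; omega

lemma wt_Phi {n : ℕ} (π : Equiv.Perm (Fin (n+1))) :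
    wt (Phi π).2 = (π 0 : ℕ) := by
  classical
  rw [wt_eq_card]
  have h1 : (Finset.univ.filter fun j => (Phi π).2 j = true)
      = Finset.univ.filter fun j : Fin n => (π j.succ : ℕ) < (π 0 : ℕ) := by
    apply Finset.filter_congr; intro j _; simp [Phi]
  rw [h1]
  have h2 : (Finset.univ.filter fun j : Fin n => (π j.succ : ℕ) < (π 0 : ℕ)).card
      = (Finset.univ.filter fun t : Fin (n+1) => (t : ℕ) < (π 0 : ℕ)).card := by
    apply Finset.card_bij' (fun j _ => π j.succ)
      (fun t ht => (π⁻¹ t).pred (by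
        intro h0
        have ht0 : t = π 0 := by
          have := congrArg π h0
          simpa using this
        rw [ht0] at ht
        simp only [mem_filter, mem_univ, true_and] at ht
        omega))
    case hi =>
      intro j hj
      simp only [mem_filter, mem_univ, true_and] at hj ⊢
      exact hj
    case hj =>
      intro t ht
      simp only [mem_filter, mem_univ, true_and] at ht ⊢
      rwa [Fin.succ_pred, Equiv.Perm.apply_inv_self]
    case left_inv =>
      intro j _
      exact Fin.succ_injective _ (by rw [Fin.succ_pred, Equiv.Perm.inv_apply_self])
    case right_inv =>
      intro t _
      rw [Fin.succ_pred, Equiv.Perm.apply_inv_self]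
  rw [h2, card_lt_fin (n+1) ((π 0 : ℕ)) (by omega)]

/-- A pair `(σ, δ)` is *good* when `δ` marks exactly the positions where `σ` takes
values `< wt δ`. -/
def good {n : ℕ} (p : Equiv.Perm (Fin n) × (Fin n → Bool)) : Prop :=
  ∀ j, p.2 j = decide ((p.1 j : ℕ) < wt p.2)

noncomputable instance {n : ℕ} :
    DecidablePred (good (n := n)) := fun _ => Classical.dec _

set_option maxHeartbeats 1600000 in
lemma good_sum (m : ℤ) {n : ℕ} (g : Fin n → ℤ) :
    ∑ p ∈ Finset.univ.filter (good (n := n)),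
      (((-1 : ℤ) ^ (wt p.2) * (Equiv.Perm.sign p.1 : ℤ)) •
        (H (m + (wt p.2 : ℤ)) *
          (List.ofFn fun j => H (g j + ((p.1 j : ℕ) : ℤ) - bti (p.2 j))).prod))
    = ∑ π : Equiv.Perm (Fin (n+1)),
        ((Equiv.Perm.sign π : ℤ) •
          (H (m + ((π 0 : ℕ) : ℤ)) *
            (List.ofFn fun j : Fin n => H (g j + ((π j.succ : ℕ) : ℤ) - 1)).prod)) := by
  classical
  apply Finset.sum_bij' (fun p _ => Psi p) (fun π _ => Phi π)
  · intro p _; exact mem_univ _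
  · intro π _
    rw [mem_filter]
    refine ⟨mem_univ _, fun j => ?_⟩
    rw [wt_Phi]
    have : ((Phi π).1 j : ℕ) < (π 0 : ℕ) ↔ ((π j.succ : ℕ) < (π 0 : ℕ)) := Phi_fst_lt_iff π j
    show decide ((π j.succ : ℕ) < ((π 0 : ℕ))) = _
    exact (decide_eq_decide.2 this).symm
  · -- left inverse : Phi (Psi p) = p
    intro p hp
    have hgood : good p := (mem_filter.1 hp).2
    have hz : Psi p 0 = wtFin p.2 := Psi_zero p
    have hfst : (Phi (Psi p)).1 = p.1 := by
      unfold Phi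
      rw [hz]
      have h2 : (wtFin p.2).cycleRange * Psi p = Equiv.Perm.decomposeFin.symm (0, p.1) := by
        unfold Psi
        exact mul_inv_cancel_left _ _
      rw [h2, Equiv.apply_symm_apply]
    refine Prod.ext hfst (funext fun j => ?_)
    show decide ((Psi p j.succ : ℕ) < ((Psi p 0 : ℕ))) = p.2 j
    rw [hz, Psi_succ, val_succAbove]
    have hwv : ((wtFin p.2 : Fin (n+1)) : ℕ) = wt p.2 := rfl
    rw [hwv, hgood j]
    by_cases hσ : (p.1 j : ℕ) < wt p.2
    · rw [if_pos hσ]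
    · rw [if_neg hσ]
      exact decide_eq_decide.2 (by omega)
  · -- right inverse : Psi (Phi π) = π
    intro π _
    have hw : wtFin (Phi π).2 = π 0 := Fin.ext (by show wt (Phi π).2 = _; rw [wt_Phi])
    show (Fin.cycleRange (wtFin (Phi π).2))⁻¹ * Equiv.Perm.decomposeFin.symm (0, (Phi π).1) = π
    rw [hw, decompose_eq π, inv_mul_cancel_left]
  · -- terms agree
    intro p hp
    have hgood : good p := (mem_filter.1 hp).2
    have hz : ((Psi p 0 : Fin (n+1)) : ℕ) = wt p.2 := by rw [Psi_zero]; rfl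
    have hsign := sign_Psi p
    have hwv : ((wtFin p.2 : Fin (n+1)) : ℕ) = wt p.2 := rfl
    have hprod : (List.ofFn fun j => H (g j + ((p.1 j : ℕ) : ℤ) - bti (p.2 j)))
        = (List.ofFn fun j : Fin n => H (g j + ((Psi p j.succ : ℕ) : ℤ) - 1)) := by
      apply congrArg
      funext j
      apply congrArg
      rw [Psi_succ, val_succAbove, hwv, hgood j]
      by_cases hσ : (p.1 j : ℕ) < wt p.2
      · rw [if_pos hσ]
        simp [bti, hσ]
      · rw [if_neg hσ]
        have hd : decide ((p.1 j : ℕ) < wt p.2) = false := by simp [hσ]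
        rw [hd]
        simp only [bti, if_false, Bool.false_eq_true]
        push_cast
        ring
    rw [hsign, hz, hprod]

/-- The summand of the expanded `Bop`-`Imm` sum. -/
noncomputable def Pterm (m : ℤ) {n : ℕ} (g : Fin n → ℤ)
    (p : Equiv.Perm (Fin n) × (Fin n → Bool)) : NSym :=
  ((-1 : ℤ) ^ (wt p.2) * (Equiv.Perm.sign p.1 : ℤ)) •
    (H (m + (wt p.2 : ℤ)) *
      (List.ofFn fun j => H (g j + ((p.1 j : ℕ) : ℤ) - bti (p.2 j))).prod)

/-- Positions in a "collision". -/
noncomputable def Coll {n : ℕ} (p : Equiv.Perm (Fin n) × (Fin n → Bool)) : Finset (Fin n) :=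
  @Finset.filter _
    (fun j => p.2 j = true ∧ ∃ j', p.2 j' = false ∧ (p.1 j : ℕ) = (p.1 j' : ℕ) + 1)
    (fun _ => Classical.dec _) Finset.univ

lemma mem_Coll {n : ℕ} {p : Equiv.Perm (Fin n) × (Fin n → Bool)} {j : Fin n} :
    j ∈ Coll p ↔ (p.2 j = true ∧ ∃ j', p.2 j' = false ∧ (p.1 j : ℕ) = (p.1 j' : ℕ) + 1) := by
  unfold Coll
  rw [Finset.filter_congr_decidable, Finset.mem_filter]
  simp

/-- If there is no collision, the pair is good (the "gap" argument). -/
lemma good_of_coll_empty {n : ℕ} (p : Equiv.Perm (Fin n) × (Fin n → Bool))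
    (hC : Coll p = ∅) : good p := by
  classical
  set s := wt p.2 with hs
  set A := Finset.univ.filter (fun j => p.2 j = true) with hA
  have hcardA : A.card = s := by rw [hA, hs, wt_eq_card]
  set V := A.image p.1 with hV
  have hcardV : V.card = s := by
    rw [hV, Finset.card_image_of_injective _ p.1.injective, hcardA]
  have hmemV : ∀ v : Fin n, v ∈ V ↔ p.2 (p.1⁻¹ v) = true := by
    intro v
    rw [hV, Finset.mem_image]
    constructor
    · rintro ⟨j, hj, rfl⟩
      rw [Equiv.Perm.inv_apply_self]
      rw [hA, mem_filter] at hj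
      exact hj.2
    · intro hv
      exact ⟨p.1⁻¹ v, by rw [hA, mem_filter]; exact ⟨mem_univ _, hv⟩,
        Equiv.Perm.apply_inv_self _ _⟩
  have hclosed : ∀ v : Fin n, v ∈ V → (v : ℕ) ≠ 0 →
      ∀ u : Fin n, (u : ℕ) = (v : ℕ) - 1 → u ∈ V := by
    intro v hv hv0 u hu
    by_contra huV
    have hcoll : p.1⁻¹ v ∈ Coll p := by
      rw [mem_Coll]
      refine ⟨(hmemV v).1 hv, p.1⁻¹ u, ?_, ?_⟩
      · have : ¬ p.2 (p.1⁻¹ u) = true := fun h => huV ((hmemV u).2 h)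
        simpa using this
      · rw [Equiv.Perm.apply_inv_self, Equiv.Perm.apply_inv_self]
        omega
    rw [hC] at hcoll
    exact absurd hcoll (Finset.notMem_empty _)
  have hdown : ∀ N : ℕ, ∀ v : Fin n, v ∈ V → (v : ℕ) = N →
      ∀ u : Fin n, (u : ℕ) ≤ N → u ∈ V := by
    intro N
    induction N with
    | zero =>
      intro v hv hv0 u hu
      have : u = v := Fin.ext (by omega)
      rwa [this]
    | succ N ih =>
      intro v hv hvN u hu
      rcases Nat.lt_or_ge (u : ℕ) (N+1) with h | h
      · have hNn : N < n := by have := v.isLt; omega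
        have hw : (⟨N, hNn⟩ : Fin n) ∈ V := hclosed v hv (by omega) ⟨N, hNn⟩ (by simp; omega)
        exact ih _ hw rfl u (by omega)
      · have : u = v := Fin.ext (by omega)
        rwa [this]
  have hVsub : ∀ v : Fin n, v ∈ V → (v : ℕ) < s := by
    intro v hv
    by_contra hvs
    push_neg at hvs
    have hsub : (Finset.univ.filter fun u : Fin n => (u : ℕ) < (v : ℕ) + 1) ⊆ V := by
      intro u hu
      rw [mem_filter] at hu
      exact hdown (v : ℕ) v hv rfl u (by omega)
    have hca := Finset.card_le_card hsub
    rw [card_lt_fin n ((v : ℕ) + 1) (by have := v.isLt; omega), hcardV] at hca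
    omega
  have hVsup : ∀ v : Fin n, (v : ℕ) < s → v ∈ V := by
    intro v hvs
    by_contra hv
    have hsub : V ⊆ Finset.univ.filter fun u : Fin n => (u : ℕ) < (v : ℕ) := by
      intro u hu
      rw [mem_filter]
      refine ⟨mem_univ _, ?_⟩
      by_contra hle
      push_neg at hle
      exact hv (hdown (u : ℕ) u hu rfl v hle)
    have hca := Finset.card_le_card hsub
    rw [card_lt_fin n (v : ℕ) (by have := v.isLt; omega)] at hca
    rw [hcardV] at hca
    omega
  intro j
  by_cases hj : p.2 j = true
  · rw [hj]
    have hjV : p.1 j ∈ V := by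
      rw [hV, Finset.mem_image]
      exact ⟨j, by rw [hA, mem_filter]; exact ⟨mem_univ _, hj⟩, rfl⟩
    exact (decide_eq_true (hVsub _ hjV)).symm
  · have hjf : p.2 j = false := by simpa using hj
    rw [hjf]
    symm
    rw [decide_eq_false_iff_not]
    intro hlt
    have hjV : p.1 j ∈ V := hVsup _ hlt
    have := (hmemV _).1 hjV
    rw [Equiv.Perm.inv_apply_self] at this
    rw [this] at hjf
    simp at hjf

lemma coll_nonempty_of_not_good {n : ℕ} (p : Equiv.Perm (Fin n) × (Fin n → Bool))
    (h : ¬ good p) : (Coll p).Nonempty := by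
  rcases Finset.eq_empty_or_nonempty (Coll p) with he | hne
  · exact absurd (good_of_coll_empty p he) h
  · exact hne

/-- The minimal collision value. -/
noncomputable def cvalN {n : ℕ} (p : Equiv.Perm (Fin n) × (Fin n → Bool))
    (h : (Coll p).Nonempty) : ℕ :=
  ((Coll p).image fun j => ((p.1 j : ℕ))).min' (h.image _)

lemma cval_exists {n : ℕ} (p : Equiv.Perm (Fin n) × (Fin n → Bool)) (h : (Coll p).Nonempty) :
    ∃ j ∈ Coll p, (p.1 j : ℕ) = cvalN p h := by
  have := Finset.min'_mem ((Coll p).image fun j => ((p.1 j : ℕ))) (h.image _)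
  rw [Finset.mem_image] at this
  obtain ⟨j, hj, hje⟩ := this
  exact ⟨j, hj, hje⟩

lemma cval_lt {n : ℕ} (p : Equiv.Perm (Fin n) × (Fin n → Bool)) (h : (Coll p).Nonempty) :
    cvalN p h < n := by
  obtain ⟨j, _, hje⟩ := cval_exists p h
  rw [← hje]
  exact (p.1 j).isLt

lemma cval_le {n : ℕ} (p : Equiv.Perm (Fin n) × (Fin n → Bool)) (h : (Coll p).Nonempty) :
    ∀ j ∈ Coll p, cvalN p h ≤ (p.1 j : ℕ) :=
  fun j hj => Finset.min'_le _ _ (Finset.mem_image_of_mem _ hj)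

noncomputable def jstar {n : ℕ} (p : Equiv.Perm (Fin n) × (Fin n → Bool))
    (h : (Coll p).Nonempty) : Fin n :=
  p.1⁻¹ ⟨cvalN p h, cval_lt p h⟩

noncomputable def jpr {n : ℕ} (p : Equiv.Perm (Fin n) × (Fin n → Bool))
    (h : (Coll p).Nonempty) : Fin n :=
  p.1⁻¹ ⟨cvalN p h - 1, by have := cval_lt p h; omega⟩

/-- The involution. -/
noncomputable def iota {n : ℕ} (p : Equiv.Perm (Fin n) × (Fin n → Bool))
    (h : (Coll p).Nonempty) : Equiv.Perm (Fin n) × (Fin n → Bool) :=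
  (p.1 * Equiv.swap (jstar p h) (jpr p h),
    Function.update (Function.update p.2 (jstar p h) false) (jpr p h) true)

section InvolutionFacts

variable {n : ℕ} (p : Equiv.Perm (Fin n) × (Fin n → Bool)) (h : (Coll p).Nonempty)

lemma sigma_jstar : (p.1 (jstar p h) : ℕ) = cvalN p h := by
  unfold jstar
  rw [Equiv.Perm.apply_inv_self]

lemma sigma_jpr : (p.1 (jpr p h) : ℕ) = cvalN p h - 1 := by
  unfold jpr
  rw [Equiv.Perm.apply_inv_self]

lemma jstar_mem : jstar p h ∈ Coll p := by
  obtain ⟨j, hj, hje⟩ := cval_exists p h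
  have hfe : (⟨cvalN p h, cval_lt p h⟩ : Fin n) = p.1 j := Fin.ext (by simpa using hje.symm)
  unfold jstar
  rw [hfe, Equiv.Perm.inv_apply_self]
  exact hj

lemma delta_jstar : p.2 (jstar p h) = true := (mem_Coll.1 (jstar_mem p h)).1

lemma cval_pos : 1 ≤ cvalN p h := by
  obtain ⟨-, j', -, hj'⟩ := mem_Coll.1 (jstar_mem p h)
  rw [sigma_jstar p h] at hj'
  omega

lemma delta_jpr : p.2 (jpr p h) = false := by
  obtain ⟨-, j', hj'f, hj'⟩ := mem_Coll.1 (jstar_mem p h)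
  rw [sigma_jstar p h] at hj'
  have : j' = jpr p h := by
    apply p.1.injective
    apply Fin.ext
    rw [sigma_jpr p h]
    omega
  rwa [← this]

lemma jstar_ne_jpr : jstar p h ≠ jpr p h := by
  intro he
  have h1 := delta_jstar p h
  rw [he, delta_jpr p h] at h1
  exact Bool.false_ne_true h1

lemma iota_fst_jstar : (((iota p h).1 (jstar p h) : Fin n) : ℕ) = cvalN p h - 1 := by
  show ((p.1 * Equiv.swap (jstar p h) (jpr p h)) (jstar p h) : ℕ) = _
  rw [Equiv.Perm.mul_apply, Equiv.swap_apply_left, sigma_jpr]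

lemma iota_fst_jpr : (((iota p h).1 (jpr p h) : Fin n) : ℕ) = cvalN p h := by
  show ((p.1 * Equiv.swap (jstar p h) (jpr p h)) (jpr p h) : ℕ) = _
  rw [Equiv.Perm.mul_apply, Equiv.swap_apply_right, sigma_jstar]

lemma iota_fst_other (x : Fin n) (h1 : x ≠ jstar p h) (h2 : x ≠ jpr p h) :
    (iota p h).1 x = p.1 x := by
  show (p.1 * Equiv.swap (jstar p h) (jpr p h)) x = _
  rw [Equiv.Perm.mul_apply, Equiv.swap_apply_of_ne_of_ne h1 h2]

lemma iota_snd_jpr : (iota p h).2 (jpr p h) = true := by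
  show Function.update (Function.update p.2 (jstar p h) false) (jpr p h) true (jpr p h) = true
  rw [Function.update_self]

lemma iota_snd_jstar : (iota p h).2 (jstar p h) = false := by
  show Function.update (Function.update p.2 (jstar p h) false) (jpr p h) true (jstar p h) = false
  rw [Function.update_of_ne (jstar_ne_jpr p h), Function.update_self]

lemma iota_snd_other (x : Fin n) (h1 : x ≠ jstar p h) (h2 : x ≠ jpr p h) :
    (iota p h).2 x = p.2 x := by
  show Function.update (Function.update p.2 (jstar p h) false) (jpr p h) true x = _
  rw [Function.update_of_ne h2, Function.update_of_ne h1]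

lemma wt_iota : wt (iota p h).2 = wt p.2 := by
  classical
  rw [wt_eq_card, wt_eq_card]
  have hset : Finset.univ.filter (fun j => (iota p h).2 j = true)
      = insert (jpr p h) ((Finset.univ.filter (fun j => p.2 j = true)).erase (jstar p h)) := by
    ext x
    rw [mem_filter, Finset.mem_insert, Finset.mem_erase, mem_filter]
    by_cases hx1 : x = jpr p h
    · simp [hx1, iota_snd_jpr p h]
    · by_cases hx2 : x = jstar p h
      · simp [hx2, iota_snd_jstar p h, jstar_ne_jpr p h, Ne.symm (jstar_ne_jpr p h)]
      · rw [iota_snd_other p h x hx2 hx1]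
        simp [hx1, hx2]
  rw [hset, Finset.card_insert_of_notMem, Finset.card_erase_of_mem]
  · have hpos : 0 < (Finset.univ.filter (fun j => p.2 j = true)).card :=
      Finset.card_pos.2 ⟨jstar p h, mem_filter.2 ⟨mem_univ _, delta_jstar p h⟩⟩
    omega
  · exact mem_filter.2 ⟨mem_univ _, delta_jstar p h⟩
  · intro hmem
    have := (mem_filter.1 (Finset.mem_of_mem_erase hmem)).2
    rw [delta_jpr p h] at this
    exact Bool.false_ne_true this

lemma prod_iota (g : Fin n → ℤ) :
    (List.ofFn fun j => H (g j + (((iota p h).1 j : ℕ) : ℤ) - bti ((iota p h).2 j)))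
      = (List.ofFn fun j => H (g j + ((p.1 j : ℕ) : ℤ) - bti (p.2 j))) := by
  apply congrArg List.ofFn
  funext x
  apply congrArg H
  have hc := cval_pos p h
  by_cases hx1 : x = jstar p h
  · rw [hx1, iota_fst_jstar p h, iota_snd_jstar p h, sigma_jstar p h, delta_jstar p h]
    simp only [bti, if_false, if_true, Bool.false_eq_true]
    omega
  · by_cases hx2 : x = jpr p h
    · rw [hx2, iota_fst_jpr p h, iota_snd_jpr p h, sigma_jpr p h, delta_jpr p h]
      simp only [bti, if_false, if_true, Bool.false_eq_true]
      omega
    · rw [iota_fst_other p h x hx1 hx2, iota_snd_other p h x hx1 hx2]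

lemma sign_iota : (Equiv.Perm.sign (iota p h).1 : ℤ) = - (Equiv.Perm.sign p.1 : ℤ) := by
  show (Equiv.Perm.sign (p.1 * Equiv.swap (jstar p h) (jpr p h)) : ℤ) = _
  rw [Equiv.Perm.sign_mul, Equiv.Perm.sign_swap (jstar_ne_jpr p h)]
  push_cast
  ring

lemma Pterm_cancel (m : ℤ) (g : Fin n → ℤ) :
    Pterm m g p + Pterm m g (iota p h) = 0 := by
  unfold Pterm
  rw [prod_iota p h g, wt_iota p h, sign_iota p h, mul_neg, ← add_smul]
  rw [add_neg_cancel, zero_smul]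

lemma coll_empty_of_good (hg : good p) : Coll p = ∅ := by
  rw [Finset.eq_empty_iff_forall_notMem]
  intro j hj
  obtain ⟨hjt, j', hj'f, hval⟩ := mem_Coll.1 hj
  have h1 := hg j
  rw [hjt] at h1
  have h2 := hg j'
  rw [hj'f] at h2
  have h1' : (p.1 j : ℕ) < wt p.2 := by
    have := h1.symm
    rwa [decide_eq_true_iff] at this
  have h2' : ¬ ((p.1 j' : ℕ) < wt p.2) := by
    have := h2.symm
    rwa [decide_eq_false_iff_not] at this
  omega

lemma jpr_mem_coll_iota : jpr p h ∈ Coll (iota p h) := by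
  rw [mem_Coll]
  refine ⟨iota_snd_jpr p h, jstar p h, iota_snd_jstar p h, ?_⟩
  rw [iota_fst_jpr p h, iota_fst_jstar p h]
  have := cval_pos p h
  omega

lemma coll_iota_nonempty : (Coll (iota p h)).Nonempty := ⟨_, jpr_mem_coll_iota p h⟩

lemma not_good_iota : ¬ good (iota p h) := by
  intro hg
  have hemp := coll_empty_of_good _ hg
  have hmem := jpr_mem_coll_iota p h
  rw [hemp] at hmem
  exact Finset.notMem_empty _ hmem

lemma cval_iota (h' : (Coll (iota p h)).Nonempty) : cvalN (iota p h) h' = cvalN p h := by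
  apply le_antisymm
  · apply Finset.min'_le
    rw [Finset.mem_image]
    exact ⟨jpr p h, jpr_mem_coll_iota p h, iota_fst_jpr p h⟩
  · apply Finset.le_min'
    intro y hy
    rw [Finset.mem_image] at hy
    obtain ⟨x, hx, rfl⟩ := hy
    by_cases hx1 : x = jpr p h
    · rw [hx1, iota_fst_jpr p h]
    · by_cases hx2 : x = jstar p h
      · exfalso
        have := (mem_Coll.1 hx).1
        rw [hx2, iota_snd_jstar p h] at this
        exact Bool.false_ne_true this
      · obtain ⟨hxt, y', hy'f, hval⟩ := mem_Coll.1 hx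
        rw [iota_fst_other p h x hx2 hx1] at hval ⊢
        rw [iota_snd_other p h x hx2 hx1] at hxt
        by_cases hy1 : y' = jstar p h
        · exfalso
          rw [hy1, iota_fst_jstar p h] at hval
          have hcv := cval_pos p h
          have hxcv : (p.1 x : ℕ) = cvalN p h := by omega
          have hxe : x = jstar p h := by
            apply p.1.injective
            apply Fin.ext
            rw [sigma_jstar p h, hxcv]
          exact hx2 hxe
        · by_cases hy2 : y' = jpr p h
          · exfalso
            rw [hy2, iota_snd_jpr p h] at hy'f
            exact Bool.noConfusion hy'f
          · rw [iota_fst_other p h y' hy1 hy2] at hval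
            rw [iota_snd_other p h y' hy1 hy2] at hy'f
            exact cval_le p h x (mem_Coll.2 ⟨hxt, y', hy'f, hval⟩)

lemma jstar_iota (h' : (Coll (iota p h)).Nonempty) : jstar (iota p h) h' = jpr p h := by
  have heq : (iota p h).1 (jpr p h) = ⟨cvalN (iota p h) h', cval_lt _ h'⟩ :=
    Fin.ext (by rw [iota_fst_jpr p h]; show _ = cvalN (iota p h) h'; rw [cval_iota p h h'])
  have hinv : (iota p h).1⁻¹ ((iota p h).1 (jpr p h)) = jpr p h :=
    Equiv.Perm.inv_apply_self _ _
  rw [heq] at hinv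
  exact hinv

lemma jpr_iota (h' : (Coll (iota p h)).Nonempty) : jpr (iota p h) h' = jstar p h := by
  have heq : (iota p h).1 (jstar p h) = ⟨cvalN (iota p h) h' - 1, by have := cval_lt _ h'; omega⟩ :=
    Fin.ext (by rw [iota_fst_jstar p h]; show _ = cvalN (iota p h) h' - 1; rw [cval_iota p h h'])
  have hinv : (iota p h).1⁻¹ ((iota p h).1 (jstar p h)) = jstar p h :=
    Equiv.Perm.inv_apply_self _ _
  rw [heq] at hinv
  exact hinv

lemma iota_iota (h' : (Coll (iota p h)).Nonempty) : iota (iota p h) h' = p := by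
  apply Prod.ext
  · show (iota p h).1 * Equiv.swap (jstar (iota p h) h') (jpr (iota p h) h') = p.1
    rw [jstar_iota p h h', jpr_iota p h h']
    show p.1 * Equiv.swap (jstar p h) (jpr p h) * Equiv.swap (jpr p h) (jstar p h) = p.1
    rw [Equiv.swap_comm (jpr p h), mul_assoc, Equiv.swap_mul_self, mul_one]
  · show Function.update (Function.update (iota p h).2 (jstar (iota p h) h') false)
        (jpr (iota p h) h') true = p.2
    rw [jstar_iota p h h', jpr_iota p h h']
    funext x
    by_cases hx1 : x = jstar p h
    · rw [hx1, Function.update_self]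
      exact (delta_jstar p h).symm
    · rw [Function.update_of_ne hx1]
      by_cases hx2 : x = jpr p h
      · rw [hx2, Function.update_self]
        exact (delta_jpr p h).symm
      · rw [Function.update_of_ne hx2]
        exact iota_snd_other p h x hx1 hx2

end InvolutionFacts

lemma bad_sum (m : ℤ) {n : ℕ} (g : Fin n → ℤ) :
    ∑ p ∈ Finset.univ.filter (fun p => ¬ good (n := n) p), Pterm m g p = 0 := by
  classical
  apply Finset.sum_involution
    (fun p hp => iota p (coll_nonempty_of_not_good p (mem_filter.1 hp).2))
  · intro p hp
    exact Pterm_cancel p _ m g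
  · intro p hp _
    intro heq
    have h1 := iota_snd_jstar p (coll_nonempty_of_not_good p (mem_filter.1 hp).2)
    rw [heq] at h1
    rw [delta_jstar p (coll_nonempty_of_not_good p (mem_filter.1 hp).2)] at h1
    exact Bool.noConfusion h1
  · intro p hp
    exact iota_iota p _ _
  · intro p hp
    exact mem_filter.2 ⟨mem_univ _, not_good_iota p _⟩

lemma good_sum' (m : ℤ) {n : ℕ} (g : Fin n → ℤ) :
    ∑ p ∈ Finset.univ.filter (good (n := n)), Pterm m g p
    = ∑ π : Equiv.Perm (Fin (n+1)),
        ((Equiv.Perm.sign π : ℤ) •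
          (H (m + ((π 0 : ℕ) : ℤ)) *
            (List.ofFn fun j : Fin n => H (g j + ((π j.succ : ℕ) : ℤ) - 1)).prod)) := by
  unfold Pterm
  exact good_sum m g

lemma main_sum (m : ℤ) {n : ℕ} (g : Fin n → ℤ) :
    ∑ p : Equiv.Perm (Fin n) × (Fin n → Bool), Pterm m g p
    = ∑ π : Equiv.Perm (Fin (n+1)),
        ((Equiv.Perm.sign π : ℤ) •
          (H (m + ((π 0 : ℕ) : ℤ)) *
            (List.ofFn fun j : Fin n => H (g j + ((π j.succ : ℕ) : ℤ) - 1)).prod)) := by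
  classical
  rw [← Finset.sum_filter_add_sum_filter_not Finset.univ (good (n := n)) (Pterm m g)]
  rw [bad_sum m g, add_zero, good_sum' m g]

lemma Bop_Imm (Mp : List ℕ → NSym →ₗ[ℚ] NSym) (hMp : MperpAxioms Mp) (m : ℤ) (α : List ℤ) :
    Bop Mp m (Imm α) = Imm (m :: α) := by
  classical
  rw [Bop_Imm_expand Mp hMp m α]
  have h1 : ∀ p : Equiv.Perm (Fin α.length) × (Fin α.length → Bool),
      (((-1 : ℤ) ^ (wt p.2) * (Equiv.Perm.sign p.1 : ℤ)) •
        (H (m + (wt p.2 : ℤ)) *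
          (List.ofFn fun j : Fin α.length =>
            H (α.get j + ((p.1 j : ℕ) : ℤ) - ((j : ℕ) : ℤ) - bti (p.2 j))).prod))
      = Pterm m (fun j : Fin α.length => α.get j - ((j : ℕ) : ℤ)) p := by
    intro p
    unfold Pterm
    have hl : (List.ofFn fun j : Fin α.length =>
        H (α.get j + ((p.1 j : ℕ) : ℤ) - ((j : ℕ) : ℤ) - bti (p.2 j)))
        = (List.ofFn fun j : Fin α.length =>
            H ((α.get j - ((j : ℕ) : ℤ)) + ((p.1 j : ℕ) : ℤ) - bti (p.2 j))) :=
      congrArg List.ofFn (funext fun j => congrArg H (by ring))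
    rw [hl]
  rw [Finset.sum_congr rfl (fun p _ => h1 p), main_sum m (fun j : Fin α.length => α.get j - ((j : ℕ) : ℤ))]
  show _ = ∑ σ : Equiv.Perm (Fin (α.length + 1)),
    (Equiv.Perm.sign σ : ℤ) •
      (List.ofFn fun i : Fin (α.length + 1) =>
        H ((m :: α).get i + ((σ i : ℕ) : ℤ) - ((i : ℕ) : ℤ))).prod
  apply Finset.sum_congr rfl
  intro π _
  have hlist : (List.ofFn fun i : Fin (α.length + 1) =>
      H ((m :: α).get i + ((π i : ℕ) : ℤ) - ((i : ℕ) : ℤ)))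
      = H (m + ((π 0 : ℕ) : ℤ)) ::
        (List.ofFn fun j : Fin α.length =>
          H ((α.get j - ((j : ℕ) : ℤ)) + ((π j.succ : ℕ) : ℤ) - 1)) := by
    rw [List.ofFn_succ]
    congr 1
    · apply congrArg H
      show m + ((π 0 : ℕ) : ℤ) - ((0 : ℕ) : ℤ) = _
      push_cast
      ring
    · apply congrArg List.ofFn
      funext j
      apply congrArg H
      have hg : (m :: α).get j.succ = α.get j := by
        show (m :: α).get ⟨(j : ℕ) + 1, _⟩ = _
        rw [List.get_cons_succ]
      rw [hg]
      have hv : ((j.succ : Fin (α.length + 1)) : ℕ) = (j : ℕ) + 1 := rfl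
      rw [hv]
      push_cast
      ring
  rw [hlist, List.prod_cons]

lemma Imm_nil : Imm ([] : List ℤ) = 1 := by
  classical
  unfold Imm
  have huniv : (Finset.univ : Finset (Equiv.Perm (Fin (List.length ([] : List ℤ)))))
      = {1} := by
    apply Finset.eq_singleton_iff_unique_mem.2
    constructor
    · exact Finset.mem_univ _
    · intro σ _
      apply Equiv.ext
      intro x
      exact absurd x.isLt (by simp)
  rw [huniv, Finset.sum_singleton]
  simp

end CreationAux

/-- **Creation operator construction of the immaculate functions.**
`𝔹_{α_1} ∘ ⋯ ∘ 𝔹_{α_m} (1) = 𝔖_α`. -/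
theorem Bop_creation (Mp : List ℕ → NSym →ₗ[ℚ] NSym) (hMp : MperpAxioms Mp)
    (α : List ℤ) :
    α.foldr (Bop Mp) 1 = Imm α := by
  induction α with
  | nil => exact CreationAux.Imm_nil.symm
  | cons m α ih =>
    show Bop Mp m (α.foldr (Bop Mp) 1) = _
    rw [ih]
    exact CreationAux.Bop_Imm Mp hMp m α
end
end

section
/- (Translation invariance of the immaculate Littlewood–Richardson coefficients.) For all compositions α, β, ν and every partition λ with |β| = |α| + |λ| and ℓ(ν) ≤ ℓ(α), one has C_{α,λ}^β = C_{α+ν,λ}^{β+ν}, where α+ν and β+ν are the compositions obtained by componentwise addition (padding ν with zeros to the required length). -/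
open scoped BigOperators

noncomputable section

/-- Componentwise addition of integer lists, padding the shorter one with zeros. -/
def padAdd (a b : List ℕ) : List ℕ :=
  List.zipWith (· + ·) (a ++ List.replicate (b.length - a.length) 0)
    (b ++ List.replicate (a.length - b.length) 0)

lemma padAdd_nil_left (b : List ℕ) : padAdd [] b = b := by
  induction b with
  | nil => rfl
  | cons y ys ih =>
    simp only [padAdd] at ih ⊢
    simp_all [List.replicate_succ]

lemma padAdd_nil_right (a : List ℕ) : padAdd a [] = a := by
  induction a with
  | nil => rfl
  | cons y ys ih =>
    simp only [padAdd] at ih ⊢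
    simp_all [List.replicate_succ]

lemma padAdd_cons (x y : ℕ) (a b : List ℕ) :
    padAdd (x :: a) (y :: b) = (x + y) :: padAdd a b := by
  simp [padAdd, Nat.succ_sub_succ]

lemma padAdd_getD (a : List ℕ) : ∀ (b : List ℕ) (i : ℕ),
    (padAdd a b).getD i 0 = a.getD i 0 + b.getD i 0 := by
  induction a with
  | nil => simp [padAdd_nil_left]
  | cons x xs ih =>
    intro b i
    cases b with
    | nil => simp [padAdd_nil_right]
    | cons y ys =>
      rw [padAdd_cons]
      cases i with
      | zero => simp
      | succ n => simpa [List.getD] using ih ys n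

lemma padAdd_length (a : List ℕ) : ∀ b : List ℕ,
    (padAdd a b).length = max a.length b.length := by
  induction a with
  | nil => simp [padAdd_nil_left]
  | cons x xs ih =>
    intro b
    cases b with
    | nil => simp [padAdd_nil_right]
    | cons y ys => simp [padAdd_cons, ih, Nat.succ_max_succ]

lemma padAdd_sum (a : List ℕ) : ∀ b : List ℕ,
    (padAdd a b).sum = a.sum + b.sum := by
  induction a with
  | nil => simp [padAdd_nil_left]
  | cons x xs ih =>
    intro b
    cases b with
    | nil => simp [padAdd_nil_right]
    | cons y ys => simp [padAdd_cons, ih]; ring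

lemma getD_le_sum (a : List ℕ) (i : ℕ) : a.getD i 0 ≤ a.sum := by
  by_cases h : i < a.length
  · rw [List.getD_eq_getElem _ _ h]
    exact List.le_sum_of_mem (a.getElem_mem h)
  · rw [List.getD_eq_default _ _ (le_of_not_gt h)]; exact Nat.zero_le _

/-- Row-shift of a filling: `toG ν f` has row `i` shifted right by `ν i`. -/
def toG (ν : List ℕ) (f : ℕ → ℕ → ℕ) : ℕ → ℕ → ℕ :=
  fun i j => if ν.getD i 0 ≤ j then f i (j - ν.getD i 0) else 0

/-- Inverse row-shift. -/
def toF (ν : List ℕ) (g : ℕ → ℕ → ℕ) : ℕ → ℕ → ℕ :=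
  fun i j => g i (j + ν.getD i 0)

lemma toG_of_le {ν : List ℕ} {f : ℕ → ℕ → ℕ} {i j : ℕ} (h : ν.getD i 0 ≤ j) :
    toG ν f i j = f i (j - ν.getD i 0) := if_pos h

lemma toF_apply (ν : List ℕ) (g : ℕ → ℕ → ℕ) (i j : ℕ) :
    toF ν g i j = g i (j + ν.getD i 0) := rfl

lemma cell_iff (α β ν : List ℕ) (i j : ℕ) :
    Cell (padAdd α ν) (padAdd β ν) i j ↔
      ν.getD i 0 ≤ j ∧ Cell α β i (j - ν.getD i 0) := by
  unfold Cell
  rw [padAdd_length, padAdd_getD, padAdd_getD]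
  constructor
  · rintro ⟨h1, h2, h3⟩
    have hb : i < β.length := by
      by_contra hb
      rw [List.getD_eq_default _ _ (le_of_not_gt hb)] at h3
      omega
    exact ⟨by omega, hb, by omega, by omega⟩
  · rintro ⟨hv, hb, h2, h3⟩
    exact ⟨by omega, by omega, by omega⟩

lemma toF_toG (ν : List ℕ) (f : ℕ → ℕ → ℕ) : toF ν (toG ν f) = f := by
  funext i j
  simp [toF, toG]

lemma toG_toF (α β ν : List ℕ) (g : ℕ → ℕ → ℕ)
    (h0 : ∀ i j, ¬ Cell (padAdd α ν) (padAdd β ν) i j → g i j = 0) :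
    toG ν (toF ν g) = g := by
  funext i j
  unfold toG toF
  by_cases h : ν.getD i 0 ≤ j
  · rw [if_pos h, Nat.sub_add_cancel h]
  · rw [if_neg h]
    symm
    apply h0
    rw [cell_iff]
    exact fun hc => h hc.1

lemma cell_shift (α β ν : List ℕ) (i j : ℕ) :
    Cell (padAdd α ν) (padAdd β ν) i (j + ν.getD i 0) ↔ Cell α β i j := by
  rw [cell_iff]
  simp [Nat.le_add_left]

lemma immTab_toG (α β ν : List ℕ) (f : ℕ → ℕ → ℕ) (hf : IsImmTab α β f) :
    IsImmTab (padAdd α ν) (padAdd β ν) (toG ν f) := by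
  obtain ⟨h1, h2, h3, h4⟩ := hf
  refine ⟨?_, ?_, ?_, ?_⟩
  · intro i j hc
    rw [cell_iff] at hc
    rw [toG_of_le hc.1]
    exact h1 _ _ hc.2
  · intro i j hc
    rw [cell_iff] at hc
    unfold toG
    split
    · exact h2 _ _ (fun hcc => hc ⟨‹_›, hcc⟩)
    · rfl
  · intro i j j' hc hc' hjj
    rw [cell_iff] at hc hc'
    unfold toG
    rw [if_pos hc.1, if_pos hc'.1]
    exact h3 _ _ _ hc.2 hc'.2 (by omega)
  · intro i i' hii hc hc'
    rw [cell_iff] at hc hc'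
    have hv : ν.getD i 0 = 0 := Nat.le_zero.mp hc.1
    have hv' : ν.getD i' 0 = 0 := Nat.le_zero.mp hc'.1
    have h5 := h4 i i' hii (by simpa [hv] using hc.2) (by simpa [hv'] using hc'.2)
    rw [toG_of_le hc.1, toG_of_le hc'.1, hv, hv']
    simpa using h5

lemma immTab_toF (α β ν : List ℕ) (hα : IsComp α) (hlen : ν.length ≤ α.length)
    (g : ℕ → ℕ → ℕ) (hg : IsImmTab (padAdd α ν) (padAdd β ν) g) :
    IsImmTab α β (toF ν g) := by
  obtain ⟨h1, h2, h3, h4⟩ := hg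
  refine ⟨?_, ?_, ?_, ?_⟩
  · intro i j hc
    exact h1 _ _ ((cell_shift α β ν i j).mpr hc)
  · intro i j hc
    exact h2 _ _ (fun hcc => hc ((cell_shift α β ν i j).mp hcc))
  · intro i j j' hc hc' hjj
    exact h3 _ _ _ ((cell_shift α β ν i j).mpr hc) ((cell_shift α β ν i j').mpr hc')
      (by omega)
  · intro i i' hii hc hc'
    have hv : ν.getD i 0 = 0 := by
      have ha0 : α.getD i 0 = 0 := Nat.le_zero.mp hc.2.1
      have hli : α.length ≤ i := by
        by_contra hl
        push_neg at hl
        have hpos := hα _ (α.getElem_mem hl)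
        rw [List.getD_eq_getElem _ _ hl] at ha0
        omega
      exact List.getD_eq_default _ _ (le_trans hlen hli)
    have hv' : ν.getD i' 0 = 0 := by
      have ha0 : α.getD i' 0 = 0 := Nat.le_zero.mp hc'.2.1
      have hli : α.length ≤ i' := by
        by_contra hl
        push_neg at hl
        have hpos := hα _ (α.getElem_mem hl)
        rw [List.getD_eq_getElem _ _ hl] at ha0
        omega
      exact List.getD_eq_default _ _ (le_trans hlen hli)
    have c1 : Cell (padAdd α ν) (padAdd β ν) i 0 := by
      have h' := (cell_shift α β ν i 0).mpr hc
      rw [hv] at h'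
      simpa using h'
    have c2 : Cell (padAdd α ν) (padAdd β ν) i' 0 := by
      have h' := (cell_shift α β ν i' 0).mpr hc'
      rw [hv'] at h'
      simpa using h'
    have h5 := h4 i i' hii c1 c2
    rw [toF_apply, toF_apply, hv, hv']
    simpa using h5


lemma readWord_toG (α β ν : List ℕ) (f : ℕ → ℕ → ℕ) :
    readWord (padAdd α ν) (padAdd β ν) (toG ν f) = readWord α β f := by
  unfold readWord
  have hseg : ∀ i : ℕ,
      ((List.range' ((padAdd α ν).getD i 0)
          ((padAdd β ν).getD i 0 - (padAdd α ν).getD i 0)).reverse).map (toG ν f i)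
        = ((List.range' (α.getD i 0) (β.getD i 0 - α.getD i 0)).reverse).map (f i) := by
    intro i
    rw [padAdd_getD, padAdd_getD]
    have hlen' : β.getD i 0 + ν.getD i 0 - (α.getD i 0 + ν.getD i 0)
        = β.getD i 0 - α.getD i 0 := by omega
    rw [hlen']
    have hr : List.range' (α.getD i 0 + ν.getD i 0) (β.getD i 0 - α.getD i 0)
        = (List.range' (α.getD i 0) (β.getD i 0 - α.getD i 0)).map (ν.getD i 0 + ·) := by
      rw [List.map_add_range']
      ring_nf
    rw [hr, ← List.map_reverse, List.map_map]
    apply List.map_congr_left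
    intro x _
    simp [Function.comp, toG]
  simp only [hseg, padAdd_length]
  obtain ⟨k, hk⟩ := Nat.exists_eq_add_of_le (le_max_left β.length ν.length)
  rw [hk, List.range_add, List.flatMap_append]
  have hnil : ((List.range k).map (fun x => β.length + x)).flatMap
      (fun i => ((List.range' (α.getD i 0) (β.getD i 0 - α.getD i 0)).reverse).map (f i))
        = [] := by
    rw [List.flatMap_eq_nil_iff]
    intro x hx
    simp only [List.mem_map, List.mem_range] at hx
    obtain ⟨t, _, rfl⟩ := hx
    have hb : β.getD (β.length + t) 0 = 0 :=
      List.getD_eq_default _ _ (Nat.le_add_right _ _)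
    simp only [hb, Nat.zero_sub, List.range'_zero, List.reverse_nil, List.map_nil]
  rw [hnil, List.append_nil]

lemma content_toG (α β ν : List ℕ) (f : ℕ → ℕ → ℕ) (m : ℕ) (hm : 0 < m)
    (h0 : ∀ i j, ¬ Cell α β i j → f i j = 0) :
    content (padAdd β ν) (toG ν f) m = content β f m := by
  have hzero' : ∀ i j, ¬ Cell (padAdd α ν) (padAdd β ν) i j → toG ν f i j = 0 := by
    intro i j hc
    unfold toG
    split
    · exact h0 _ _ (fun hcc => hc ((cell_iff α β ν i j).mpr ⟨‹_›, hcc⟩))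
    · rfl
  unfold content
  symm
  apply Finset.card_nbij' (i := fun p => (p.1, p.2 + ν.getD p.1 0))
    (j := fun q => (q.1, q.2 - ν.getD q.1 0))
  · intro p hp
    simp only [Finset.mem_coe, Finset.mem_filter, Finset.mem_product, Finset.mem_range] at hp ⊢
    have hc : Cell α β p.1 p.2 := by
      by_contra hc
      rw [h0 _ _ hc] at hp
      omega
    have hc' : Cell (padAdd α ν) (padAdd β ν) p.1 (p.2 + ν.getD p.1 0) :=
      (cell_shift α β ν p.1 p.2).mpr hc
    refine ⟨⟨?_, ?_⟩, ?_⟩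
    · rw [padAdd_length]
      exact lt_of_lt_of_le hc.1 (le_max_left _ _)
    · rw [padAdd_sum]
      have h1 : p.2 < β.getD p.1 0 := hc.2.2
      have h2 : β.getD p.1 0 ≤ β.sum := getD_le_sum β p.1
      have h3 : ν.getD p.1 0 ≤ ν.sum := getD_le_sum ν p.1
      omega
    · simp only [toG, if_pos (Nat.le_add_left _ _), Nat.add_sub_cancel]
      exact hp.2
  · intro q hq
    simp only [Finset.mem_coe, Finset.mem_filter, Finset.mem_product, Finset.mem_range] at hq ⊢
    have hc' : Cell (padAdd α ν) (padAdd β ν) q.1 q.2 := by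
      by_contra hc
      rw [hzero' _ _ hc] at hq
      omega
    rw [cell_iff] at hc'
    obtain ⟨hv, hc⟩ := hc'
    refine ⟨⟨hc.1, ?_⟩, ?_⟩
    · have h1 : q.2 - ν.getD q.1 0 < β.getD q.1 0 := hc.2.2
      have h2 : β.getD q.1 0 ≤ β.sum := getD_le_sum β q.1
      omega
    · have := hq.2
      rw [toG, if_pos hv] at this
      exact this
  · intro p hp
    simp [Nat.add_sub_cancel]
  · intro q hq
    simp only [Finset.mem_coe, Finset.mem_filter, Finset.mem_product, Finset.mem_range] at hq
    have hc' : Cell (padAdd α ν) (padAdd β ν) q.1 q.2 := by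
      by_contra hc
      rw [hzero' _ _ hc] at hq
      omega
    rw [cell_iff] at hc'
    have hq2 : q.2 - ν.getD q.1 0 + ν.getD q.1 0 = q.2 := Nat.sub_add_cancel hc'.1
    simp only [hq2]

/-- **Translation invariance of the immaculate Littlewood–Richardson coefficients.**
`C_{α,λ}^β = C_{α+ν,λ}^{β+ν}` whenever `ℓ(ν) ≤ ℓ(α)`. -/
theorem Ccoef_translation_invariance (α β ν lam : List ℕ)
    (hα : IsComp α) (hβ : IsComp β) (hν : IsComp ν)
    (hlam : IsComp lam) (hpart : lam.Pairwise (· ≥ ·))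
    (hsum : β.sum = α.sum + lam.sum) (hlen : ν.length ≤ α.length) :
    Ccoef α lam β = Ccoef (padAdd α ν) lam (padAdd β ν) := by
  apply Nat.card_congr
  refine ⟨fun x => ⟨toG ν x.1, ?_, ?_, ?_⟩, fun y => ⟨toF ν y.1, ?_, ?_, ?_⟩, ?_, ?_⟩
  · exact immTab_toG α β ν x.1 x.2.1
  · intro k
    rw [content_toG α β ν x.1 (k + 1) (Nat.succ_pos k) x.2.1.2.1]
    exact x.2.2.1 k
  · rw [readWord_toG]
    exact x.2.2.2
  · exact immTab_toF α β ν hα hlen y.1 y.2.1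
  · intro k
    have h0' : ∀ i j, ¬ Cell α β i j → toF ν y.1 i j = 0 :=
      (immTab_toF α β ν hα hlen y.1 y.2.1).2.1
    have h := content_toG α β ν (toF ν y.1) (k + 1) (Nat.succ_pos k) h0'
    rw [toG_toF α β ν y.1 y.2.1.2.1] at h
    rw [← h]
    exact y.2.2.1 k
  · have h := readWord_toG α β ν (toF ν y.1)
    rw [toG_toF α β ν y.1 y.2.1.2.1] at h
    rw [← h]
    exact y.2.2.2
  · intro x
    exact Subtype.ext (toF_toG ν x.1)
  · intro y
    exact Subtype.ext (toG_toF α β ν y.1 y.2.1.2.1)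
end
end
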